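/- arXiv:1504.04576 — 11 statements merged into one kernel-verified Lean document; each statement's English description precedes it below -/
import Mathlib

section
/- Let A be a nonnegative bounded linear operator on L²(X) with A^r = A for an integer r ≥ 2, and suppose the kernel of A contains no nonzero nonnegative function. Then for every real-valued function f in the range of A, both the positive part f⁺ = max(f,0) and the negative part f⁻ = max(−f,0) lie in the range of A. -/
/-!
Write `r = m + 2`. Then `P = A ^ (m + 1)` is a positive idempotent with the same range as `A`, and
no nonzero positive element is killed by a power of `A`. If `P f = f`, then `f = P f ≤ P f⁺` and
`0 ≤ P f⁺`, so `f⁺ ≤ P f⁺`; the positive element `P f⁺ - f⁺` lies in the kernel of `P`, hence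
vanishes, and `f⁺ = P f⁺` lies in the range of `A`. The negative part is `f⁻ = (-f)⁺`.
-/

open MeasureTheory

section PowerIterates

variable {E F : Type*} [Zero E] [LE E] [Monoid F] [FunLike F E E] [IsMulApplyEqComp F E]
  [IsOneApplyEqSelf F E] {T : F}

theorem pow_apply_nonneg (hpos : ∀ x, 0 ≤ x → 0 ≤ T x) (n : ℕ) (x : E) (hx : 0 ≤ x) :
    0 ≤ (T ^ n) x := by
  induction n generalizing x with
  | zero => simpa using hx
  | succ n ih => simpa [pow_succ] using ih _ (hpos x hx)

theorem eq_zero_of_pow_apply_eq_zero (hpos : ∀ x, 0 ≤ x → 0 ≤ T x)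
    (hker : ∀ x, T x = 0 → 0 ≤ x → x = 0) (n : ℕ) (x : E) (hTx : (T ^ n) x = 0) (hx : 0 ≤ x) :
    x = 0 := by
  induction n generalizing x with
  | zero => simpa using hTx
  | succ n ih =>
    rw [pow_succ, mul_apply_eq_comp] at hTx
    exact hker x (ih _ hTx (hpos x hx)) hx

end PowerIterates

section LatticeOrdered

variable {E F : Type*} [AddCommGroup E] [Lattice E] [IsOrderedAddMonoid E] [FunLike F E E]
  [AddMonoidHomClass F E E]

theorem IsIdempotentElem.map_posPart_eq [Mul F] [IsMulApplyEqComp F E] {P : F}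
    (hP : IsIdempotentElem P) (hpos : ∀ x, 0 ≤ x → 0 ≤ P x)
    (hker : ∀ x, P x = 0 → 0 ≤ x → x = 0) {f : E} (hf : P f = f) : P f⁺ = f⁺ := by
  have hle : f⁺ ≤ P f⁺ := by
    refine sup_le ?_ (hpos _ (posPart_nonneg f))
    have := hpos _ (sub_nonneg.2 (le_posPart f))
    rwa [map_sub, hf, sub_nonneg] at this
  have hPker : P (P f⁺ - f⁺) = 0 := by
    rw [map_sub, ← mul_apply_eq_comp, hP.eq, sub_self]
  exact sub_eq_zero.1 (hker _ hPker (sub_nonneg.2 hle))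

theorem posPart_mem_range_of_pow_eq_self [Monoid F] [IsMulApplyEqComp F E]
    [IsOneApplyEqSelf F E] {T : F} (hpos : ∀ x, 0 ≤ x → 0 ≤ T x)
    (hker : ∀ x, T x = 0 → 0 ≤ x → x = 0) {r : ℕ} (hr : 2 ≤ r) (hT : T ^ r = T) {f : E}
    (hf : f ∈ Set.range T) : f⁺ ∈ Set.range T := by
  obtain ⟨m, rfl⟩ : ∃ m, r = m + 2 := ⟨r - 2, by omega⟩
  obtain ⟨g, rfl⟩ := hf
  have hPT : T ^ (m + 1) * T = T := by rw [← pow_succ, hT]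
  have hP : IsIdempotentElem (T ^ (m + 1)) :=
    calc T ^ (m + 1) * T ^ (m + 1) = T ^ (m + 1) * T * T ^ m := by rw [mul_assoc, ← pow_succ']
      _ = T ^ (m + 1) := by rw [hPT, ← pow_succ']
  have hfix : (T ^ (m + 1)) (T g) = T g := by rw [← mul_apply_eq_comp, hPT]
  refine ⟨(T ^ m) (T g)⁺, ?_⟩
  rw [← mul_apply_eq_comp, ← pow_succ',
    hP.map_posPart_eq (pow_apply_nonneg hpos _) (eq_zero_of_pow_apply_eq_zero hpos hker _) hfix]

theorem negPart_mem_range_of_pow_eq_self [Monoid F] [IsMulApplyEqComp F E]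
    [IsOneApplyEqSelf F E] {T : F} (hpos : ∀ x, 0 ≤ x → 0 ≤ T x)
    (hker : ∀ x, T x = 0 → 0 ≤ x → x = 0) {r : ℕ} (hr : 2 ≤ r) (hT : T ^ r = T) {f : E}
    (hf : f ∈ Set.range T) : f⁻ ∈ Set.range T := by
  obtain ⟨g, rfl⟩ := hf
  rw [← posPart_neg, ← map_neg]
  exact posPart_mem_range_of_pow_eq_self hpos hker hr hT ⟨-g, rfl⟩

end LatticeOrdered

namespace MeasureTheory.Lp

variable {X : Type*} [MeasurableSpace X] {μ : Measure X} {p : ENNReal}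

theorem coeFn_posPart_ae_eq_max (f : Lp ℝ p μ) : ⇑f⁺ =ᵐ[μ] fun x => max (f x) 0 := by
  filter_upwards [coeFn_sup f 0, coeFn_zero ℝ p μ] with x hsup hzero
  rw [posPart_def, hsup, Pi.sup_apply, hzero, Pi.zero_apply]

theorem coeFn_negPart_ae_eq_max (f : Lp ℝ p μ) : ⇑f⁻ =ᵐ[μ] fun x => max (-f x) 0 := by
  filter_upwards [coeFn_posPart_ae_eq_max (-f), coeFn_neg f] with x hpos hneg
  rw [← posPart_neg, hpos, hneg, Pi.neg_apply]

end MeasureTheory.Lp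

theorem stmt6_general {X : Type*} [MeasurableSpace X] (μ : Measure X)
    (A : Lp ℝ 2 μ →L[ℝ] Lp ℝ 2 μ)
    (hpos : ∀ f : Lp ℝ 2 μ, 0 ≤ f → 0 ≤ A f)
    (r : ℕ) (hr : 2 ≤ r) (hpot : A ^ r = A)
    (hker : ∀ h : Lp ℝ 2 μ, A h = 0 → 0 ≤ h → h = 0)
    (f : Lp ℝ 2 μ) (hf : f ∈ Set.range A) :
    (∃ g ∈ Set.range A, (g : X → ℝ) =ᵐ[μ] fun x => max (f x) 0) ∧
    (∃ h ∈ Set.range A, (h : X → ℝ) =ᵐ[μ] fun x => max (-(f x)) 0) :=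
  ⟨⟨f⁺, posPart_mem_range_of_pow_eq_self hpos hker hr hpot hf, Lp.coeFn_posPart_ae_eq_max f⟩,
    ⟨f⁻, negPart_mem_range_of_pow_eq_self hpos hker hr hpot hf, Lp.coeFn_negPart_ae_eq_max f⟩⟩

theorem stmt6 {X : Type*} [MeasurableSpace X] (μ : Measure X) [IsFiniteMeasure μ]
    (A : Lp ℝ 2 μ →L[ℝ] Lp ℝ 2 μ)
    (hpos : ∀ f : Lp ℝ 2 μ, 0 ≤ f → 0 ≤ A f)
    (r : ℕ) (hr : 2 ≤ r) (hpot : A ^ r = A)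
    (hker : ∀ h : Lp ℝ 2 μ, A h = 0 → 0 ≤ h → h = 0)
    (f : Lp ℝ 2 μ) (hf : f ∈ Set.range A) :
    (∃ g ∈ Set.range A, (g : X → ℝ) =ᵐ[μ] fun x => max (f x) 0) ∧
    (∃ h ∈ Set.range A, (h : X → ℝ) =ᵐ[μ] fun x => max (-(f x)) 0) :=
  stmt6_general μ A hpos r hr hpot hker f hf
end

section
/- Let A be a nonnegative bounded linear operator on L²(X) with A^r = A (r ≥ 2), whose kernel contains no nonzero nonnegative function, and whose range is finite-dimensional with real basis functions. Then the range of A admits a basis consisting of nonnegative functions. -/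
open MeasureTheory

/-!
Put `P = A ^ (r - 1)`: it is positive and fixes every `f ∈ range A`, so `±f = P (±f) ≤ P |f|`,
i.e. `|f| ≤ P |f|`. The nonnegative function `P |f| - |f|` lies in `ker A` because `A P = A ^ r = A`,
hence vanishes; thus `|f| = P |f| ∈ range A`. A subspace closed under `|·|` is spanned by its
nonnegative elements, since `f = |f| - (|f| - f)`, and a finite-dimensional space has a basis
chosen from any spanning set.
-/

theorem Module.End.pow_apply_nonneg {R E : Type*} [Semiring R] [AddCommMonoid E] [Preorder E]
    [Module R E] {T : Module.End R E} (hT : ∀ f, 0 ≤ f → 0 ≤ T f) (n : ℕ) (f : E)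
    (hf : 0 ≤ f) : 0 ≤ (T ^ n) f := by
  induction n with
  | zero => simpa using hf
  | succ n ih => simpa only [pow_succ', Module.End.mul_apply] using hT _ ih

section LatticeOrdered

variable {R E : Type*} [Semiring R] [AddCommGroup E] [Lattice E] [IsOrderedAddMonoid E]
  [Module R E]

theorem LinearMap.monotone_of_map_nonneg {T : E →ₗ[R] E} (hT : ∀ f, 0 ≤ f → 0 ≤ T f) :
    Monotone T := fun f g hfg => by
  simpa only [map_sub, sub_nonneg] using hT (g - f) (sub_nonneg.mpr hfg)

theorem abs_le_apply_abs_of_apply_eq {T : E →ₗ[R] E} (hT : ∀ f, 0 ≤ f → 0 ≤ T f) {f : E}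
    (hf : T f = f) : |f| ≤ T |f| := by
  have hmono := LinearMap.monotone_of_map_nonneg hT
  refine abs_le'.mpr ⟨?_, ?_⟩
  · simpa only [hf] using hmono (le_abs_self f)
  · simpa only [map_neg, hf] using hmono (neg_le_abs f)

theorem abs_mem_range_of_pow_eq_self {A : Module.End R E} (hA : ∀ f, 0 ≤ f → 0 ≤ A f)
    {r : ℕ} (hr : 2 ≤ r) (hpot : A ^ r = A) (hker : ∀ h, A h = 0 → 0 ≤ h → h = 0) {f : E}
    (hf : f ∈ LinearMap.range A) : |f| ∈ LinearMap.range A := by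
  obtain ⟨k, rfl⟩ : ∃ k, r = k + 2 := ⟨r - 2, by omega⟩
  have hAP : A * A ^ (k + 1) = A := by rw [← pow_succ', hpot]
  have hPA : A ^ (k + 1) * A = A := by rw [← pow_succ, hpot]
  have hfix : (A ^ (k + 1)) f = f := by
    obtain ⟨g, rfl⟩ := hf
    rw [← Module.End.mul_apply, hPA]
  have hle : |f| ≤ (A ^ (k + 1)) |f| :=
    abs_le_apply_abs_of_apply_eq (Module.End.pow_apply_nonneg hA _) hfix
  have hker_diff : A ((A ^ (k + 1)) |f| - |f|) = 0 := by
    rw [map_sub, ← Module.End.mul_apply, hAP, sub_self]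
  have heq : (A ^ (k + 1)) |f| = |f| := sub_eq_zero.mp (hker _ hker_diff (sub_nonneg.mpr hle))
  rw [← heq, pow_succ', Module.End.mul_apply]
  exact LinearMap.mem_range_self A _

end LatticeOrdered

theorem Submodule.span_nonneg_eq_top_of_abs_mem {R E : Type*} [Ring R] [AddCommGroup E]
    [Lattice E] [IsOrderedAddMonoid E] [Module R E] (V : Submodule R E) (hV : ∀ f ∈ V, |f| ∈ V) :
    Submodule.span R {v : V | 0 ≤ (v : E)} = ⊤ := by
  refine Submodule.eq_top_iff'.mpr fun v => ?_
  let w : V := ⟨|(v : E)|, hV _ v.2⟩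
  have hw : w ∈ Submodule.span R {v : V | 0 ≤ (v : E)} :=
    Submodule.subset_span (abs_nonneg (v : E))
  have hwv : w - v ∈ Submodule.span R {v : V | 0 ≤ (v : E)} :=
    Submodule.subset_span (sub_nonneg.mpr (le_abs_self (v : E)))
  simpa only [sub_sub_cancel] using Submodule.sub_mem _ hw hwv

theorem exists_finBasis_subset_of_span_eq_top {K V : Type*} [DivisionRing K] [AddCommGroup V]
    [Module K V] [FiniteDimensional K V] {s : Set V} (hs : Submodule.span K s = ⊤) :
    ∃ (N : ℕ) (b : Module.Basis (Fin N) K V), ∀ j, b j ∈ s := by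
  let b := Module.Basis.ofSpan hs.ge
  have : Fintype _ := FiniteDimensional.fintypeBasisIndex b
  refine ⟨_, b.reindex (Fintype.equivFin _), fun j => ?_⟩
  rw [Module.Basis.reindex_apply]
  exact Module.Basis.ofSpan_subset hs.ge (Set.mem_range_self _)

theorem stmt7_general {X : Type*} [MeasurableSpace X] (μ : Measure X)
    (A : Lp ℝ 2 μ →L[ℝ] Lp ℝ 2 μ)
    (hpos : ∀ f : Lp ℝ 2 μ, 0 ≤ f → 0 ≤ A f)
    (r : ℕ) (hr : 2 ≤ r) (hpot : A ^ r = A)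
    (hker : ∀ h : Lp ℝ 2 μ, A h = 0 → 0 ≤ h → h = 0)
    (hfin : FiniteDimensional ℝ (LinearMap.range (A : Lp ℝ 2 μ →ₗ[ℝ] Lp ℝ 2 μ))) :
    ∃ (N : ℕ) (b : Module.Basis (Fin N) ℝ (LinearMap.range (A : Lp ℝ 2 μ →ₗ[ℝ] Lp ℝ 2 μ))),
      ∀ j, 0 ≤ (b j : Lp ℝ 2 μ) := by
  have hpot' : (A : Module.End ℝ (Lp ℝ 2 μ)) ^ r = A := by
    rw [← ContinuousLinearMap.toLinearMap_pow, hpot]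
  have habs : ∀ f ∈ LinearMap.range (A : Lp ℝ 2 μ →ₗ[ℝ] Lp ℝ 2 μ),
      |f| ∈ LinearMap.range (A : Lp ℝ 2 μ →ₗ[ℝ] Lp ℝ 2 μ) :=
    fun _ => abs_mem_range_of_pow_eq_self hpos hr hpot' hker
  exact exists_finBasis_subset_of_span_eq_top (Submodule.span_nonneg_eq_top_of_abs_mem _ habs)

theorem stmt7 {X : Type*} [MeasurableSpace X] (μ : Measure X) [IsFiniteMeasure μ]
    (A : Lp ℝ 2 μ →L[ℝ] Lp ℝ 2 μ)
    (hpos : ∀ f : Lp ℝ 2 μ, 0 ≤ f → 0 ≤ A f)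
    (r : ℕ) (hr : 2 ≤ r) (hpot : A ^ r = A)
    (hker : ∀ h : Lp ℝ 2 μ, A h = 0 → 0 ≤ h → h = 0)
    (hfin : FiniteDimensional ℝ (LinearMap.range (A : Lp ℝ 2 μ →ₗ[ℝ] Lp ℝ 2 μ))) :
    ∃ (N : ℕ) (b : Module.Basis (Fin N) ℝ (LinearMap.range (A : Lp ℝ 2 μ →ₗ[ℝ] Lp ℝ 2 μ))),
      ∀ j, 0 ≤ (b j : Lp ℝ 2 μ) :=
  stmt7_general μ A hpos r hr hpot hker hfin
end

section
/- Given two linearly independent real functions f, g in L²(X) with g not the zero function, there exists a real scalar p such that f − p·g is a mixed function, i.e., both its positive part and its negative part have supports of positive measure. -/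
open MeasureTheory

-- aux: support measure zero iff ae nonpos
lemma aux_supp {X : Type*} [MeasurableSpace X] (μ : Measure X) [IsFiniteMeasure μ]
    (u : Lp ℝ 2 μ) :
    ¬ 0 < μ (Function.support ((u ⊔ 0 : Lp ℝ 2 μ) : X → ℝ)) ↔ ∀ᵐ x ∂μ, u x ≤ 0 := by
  rw [not_lt, le_zero_iff]
  have h1 : (((u ⊔ 0 : Lp ℝ 2 μ) : X → ℝ)) =ᵐ[μ] fun x => max (u x) 0 := by
    filter_upwards [Lp.coeFn_sup u 0, Lp.coeFn_zero ℝ 2 μ] with x h1 h2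
    rw [h1, Pi.sup_apply, h2, Pi.zero_apply]
  constructor
  · intro h
    have : (((u ⊔ 0 : Lp ℝ 2 μ) : X → ℝ)) =ᵐ[μ] 0 := by
      rw [Filter.EventuallyEq, ae_iff]
      exact h
    filter_upwards [h1.symm.trans this] with x hx
    simp only [Pi.zero_apply] at hx
    by_contra hpos
    push_neg at hpos
    rw [max_eq_left hpos.le] at hx
    exact hpos.ne' (by linarith)
  · intro h
    have : (((u ⊔ 0 : Lp ℝ 2 μ) : X → ℝ)) =ᵐ[μ] 0 := by
      filter_upwards [h1, h] with x hx hle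
      simp [hx, max_eq_right hle]
    rw [Filter.EventuallyEq, ae_iff] at this
    exact this

lemma aux_zero {X : Type*} [MeasurableSpace X] (μ : Measure X)
    (F G : X → ℝ) (h : ∀ p : ℝ, ∀ᵐ x ∂μ, F x ≤ p * G x) :
    ∀ᵐ x ∂μ, G x = 0 := by
  have h' : ∀ᵐ x ∂μ, ∀ n : ℤ, F x ≤ (n : ℝ) * G x := ae_all_iff.mpr fun n => h n
  filter_upwards [h'] with x hx
  by_contra hG
  have habs : 0 < |G x| := abs_pos.mpr hG
  obtain ⟨n, hn⟩ := exists_nat_gt (-F x / |G x|)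
  have h1 := hx n
  have h2 := hx (-n)
  push_cast at h1 h2
  have hkey : F x ≤ -(n : ℝ) * |G x| := by
    rcases le_or_gt 0 (G x) with he | he
    · rw [abs_of_nonneg he]; exact h2
    · rw [abs_of_neg he, neg_mul_neg]; exact h1
  rw [div_lt_iff₀ habs] at hn
  nlinarith

theorem stmt8 {X : Type*} [MeasurableSpace X] (μ : Measure X) [IsFiniteMeasure μ]
    (f g : Lp ℝ 2 μ) (hg : g ≠ 0) (hli : LinearIndependent ℝ ![f, g]) :
    ∃ p : ℝ,
      0 < μ (Function.support (((f - p • g) ⊔ 0 : Lp ℝ 2 μ) : X → ℝ)) ∧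
      0 < μ (Function.support (((-(f - p • g)) ⊔ 0 : Lp ℝ 2 μ) : X → ℝ)) := by
  rw [linearIndependent_fin2] at hli
  simp only [Matrix.cons_val_one, Matrix.head_cons, Matrix.cons_val_zero] at hli
  by_contra hcon
  push_neg at hcon
  -- coe of f - p•g
  have hcoe : ∀ p : ℝ, ((f - p • g : Lp ℝ 2 μ) : X → ℝ) =ᵐ[μ] fun x => f x - p * g x := by
    intro p
    filter_upwards [Lp.coeFn_sub f (p • g), Lp.coeFn_smul p g] with x h1 h2
    rw [h1, Pi.sub_apply, h2, Pi.smul_apply, smul_eq_mul]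
  set A : Set ℝ := {p | ∀ᵐ x ∂μ, f x ≤ p * g x} with hA
  set B : Set ℝ := {p | ∀ᵐ x ∂μ, p * g x ≤ f x} with hB
  have hcover : ∀ p : ℝ, p ∈ A ∪ B := by
    intro p
    by_cases hpos : 0 < μ (Function.support (((f - p • g) ⊔ 0 : Lp ℝ 2 μ) : X → ℝ))
    · right
      have h := hcon p hpos
      have := (aux_supp μ (-(f - p • g))).mp (not_lt.mpr h)
      filter_upwards [this, hcoe p, Lp.coeFn_neg (f - p • g)] with x h1 h2 h3
      rw [h3] at h1
      simp only [Pi.neg_apply, h2] at h1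
      linarith
    · left
      have := (aux_supp μ (f - p • g)).mp hpos
      filter_upwards [this, hcoe p] with x h1 h2
      rw [h2] at h1; linarith
  have hdisj : ∀ p, ¬ (p ∈ A ∧ p ∈ B) := by
    rintro p ⟨ha, hb⟩
    apply hli.2 p
    refine (Lp.ext ?_).symm
    filter_upwards [ha, hb, Lp.coeFn_smul p g] with x h1 h2 h3
    rw [h3]
    simp only [Pi.smul_apply, smul_eq_mul]
    linarith
  have hAc : IsClosed A := by
    apply IsSeqClosed.isClosed
    intro u p hu hup
    have : ∀ᵐ x ∂μ, ∀ n, f x ≤ u n * g x := ae_all_iff.mpr hu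
    filter_upwards [this] with x hx
    have : Filter.Tendsto (fun n => u n * g x) Filter.atTop (nhds (p * g x)) :=
      hup.mul_const _
    exact ge_of_tendsto this (Filter.Eventually.of_forall hx)
  have hBc : IsClosed B := by
    apply IsSeqClosed.isClosed
    intro u p hu hup
    have : ∀ᵐ x ∂μ, ∀ n, u n * g x ≤ f x := ae_all_iff.mpr hu
    filter_upwards [this] with x hx
    have : Filter.Tendsto (fun n => u n * g x) Filter.atTop (nhds (p * g x)) :=
      hup.mul_const _
    exact le_of_tendsto this (Filter.Eventually.of_forall hx)
  -- A is clopen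
  have hAeq : A = Bᶜ := by
    ext p
    constructor
    · intro h hb; exact hdisj p ⟨h, hb⟩
    · intro h; rcases hcover p with h' | h'; exact h'; exact absurd h' h
  have hclopen : IsClopen A := ⟨hAc, by rw [hAeq]; exact hBc.isOpen_compl⟩
  have hgz : g = 0 := by
    apply Lp.ext
    refine Filter.EventuallyEq.trans ?_ (Lp.coeFn_zero ℝ 2 μ).symm
    rcases (isClopen_iff.mp hclopen) with hAe | hAu
    · -- A empty, so B = univ
      have hBall : ∀ p : ℝ, ∀ᵐ x ∂μ, p * g x ≤ f x := by
        intro p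
        rcases hcover p with h | h
        · exact absurd h (by rw [hAe]; exact Set.notMem_empty p)
        · exact h
      have := aux_zero μ (fun x => -f x) g (fun p => by
        filter_upwards [hBall (-p)] with x hx; simpa using by linarith)
      filter_upwards [this] with x hx; exact hx
    · have hAall : ∀ p : ℝ, ∀ᵐ x ∂μ, f x ≤ p * g x := fun p => by
        have : p ∈ A := hAu ▸ Set.mem_univ p
        exact this
      have := aux_zero μ (fun x => f x) g hAall
      filter_upwards [this] with x hx; exact hx
  exact hg hgz
end

section
/- Let A be a nonnegative bounded linear operator on L²(X) with A^r = A (r ≥ 2), kernel containing no nonzero nonnegative function, and finite-dimensional range. If e_r, e_s are nonnegative functions in R(A) with Supp e_r ⊆ Supp e_s (up to measure zero) and e_r, e_s linearly independent, then there exist two nonzero nonnegative functions in R(A) with essentially disjoint supports. -/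
open MeasureTheory

theorem stmt10 {X : Type*} [MeasurableSpace X] (μ : Measure X) [IsFiniteMeasure μ]
    (A : Lp ℝ 2 μ →L[ℝ] Lp ℝ 2 μ)
    (hpos : ∀ f : Lp ℝ 2 μ, 0 ≤ f → 0 ≤ A f)
    (r : ℕ) (hr : 2 ≤ r) (hpot : A ^ r = A)
    (hker : ∀ h : Lp ℝ 2 μ, A h = 0 → 0 ≤ h → h = 0)
    (hfin : FiniteDimensional ℝ (LinearMap.range (A : Lp ℝ 2 μ →ₗ[ℝ] Lp ℝ 2 μ)))
    (er es : Lp ℝ 2 μ) (her : er ∈ Set.range A) (hes : es ∈ Set.range A)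
    (her0 : 0 ≤ er) (hes0 : 0 ≤ es)
    (hli : LinearIndependent ℝ ![er, es])
    (hsub : μ (Function.support (er : X → ℝ) \ Function.support (es : X → ℝ)) = 0) :
    ∃ g ∈ Set.range A, ∃ h ∈ Set.range A,
      g ≠ 0 ∧ h ≠ 0 ∧ 0 ≤ g ∧ 0 ≤ h ∧
      μ (Function.support (g : X → ℝ) ∩ Function.support (h : X → ℝ)) = 0 := by
  -- er and es are nonzero and not proportional
  have her' : er ≠ 0 := by
    have := hli.ne_zero 0; simpa using this
  have hes' : es ≠ 0 := by
    have := hli.ne_zero 1; simpa using this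
  have hprop : ∀ t : ℝ, 0 < t → es ≠ t • er := by
    intro t ht htt
    obtain ⟨-, h2⟩ := linearIndependent_fin2.mp hli
    apply h2 t⁻¹
    simp only [Matrix.cons_val_one, Matrix.head_cons, Matrix.cons_val_zero]
    rw [htt, smul_smul, inv_mul_cancel₀ ht.ne', one_smul]
  have hsmul0 : ∀ c : ℝ, 0 ≤ c → ∀ v : Lp ℝ 2 μ, 0 ≤ v → 0 ≤ c • v := by
    intro c hc v hv
    apply (Lp.coeFn_nonneg _).mp
    have h1 := (Lp.coeFn_nonneg v).mpr hv
    have h2 := Lp.coeFn_smul c v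
    filter_upwards [h1, h2] with x hx1 hx2
    rw [hx2]
    simpa using mul_nonneg hc hx1
  -- positivity of powers of A
  have hpow_pos : ∀ (k : ℕ) (f : Lp ℝ 2 μ), 0 ≤ f → 0 ≤ (A ^ k) f := by
    intro k
    induction k with
    | zero => intro f hf; simpa using hf
    | succ n ih =>
        intro f hf
        rw [pow_succ, ContinuousLinearMap.mul_apply]
        exact ih (A f) (hpos f hf)
  -- kernel of A^(r-1) has no nonzero nonnegative element
  have hkerP : ∀ f : Lp ℝ 2 μ, (A ^ (r - 1)) f = 0 → 0 ≤ f → f = 0 := by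
    intro f hf hf0
    apply hker f _ hf0
    have hr' : A * A ^ (r - 1) = A ^ r := by
      rw [← pow_succ']
      congr 1
      omega
    have h1 : (A ^ r) f = 0 := by
      rw [← hr', ContinuousLinearMap.mul_apply, hf, map_zero]
    rwa [hpot] at h1
  -- A^(r-1) fixes the range of A
  have hfixP : ∀ x : Lp ℝ 2 μ, (A ^ (r - 1)) (A x) = A x := by
    intro x
    have hr' : A ^ (r - 1) * A = A ^ r := by
      rw [← pow_succ]
      congr 1
      omega
    rw [← ContinuousLinearMap.mul_apply, hr', hpot]
  -- elements of the form A^(r-1) f are in the range of A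
  have hmem : ∀ f : Lp ℝ 2 μ, (A ^ (r - 1)) f ∈ Set.range ⇑A := by
    intro f
    refine ⟨(A ^ (r - 2)) f, ?_⟩
    rw [← ContinuousLinearMap.mul_apply, ← pow_succ']
    congr 2
    omega
  -- find t > 0 such that t • er and es are incomparable
  have hExists : ∃ t : ℝ, 0 < t ∧ ¬(t • er ≤ es) ∧ ¬(es ≤ t • er) := by
    by_contra hcon
    push_neg at hcon
    have hcont : Continuous fun t : ℝ => t • er := by fun_prop
    have hC1 : IsClosed {t : ℝ | t • er ≤ es} :=
      isClosed_le hcont continuous_const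
    have hC2 : IsClosed {t : ℝ | es ≤ t • er} :=
      isClosed_le continuous_const hcont
    have hcover : Set.Ioi (0:ℝ) ⊆ {t : ℝ | t • er ≤ es} ∪ {t : ℝ | es ≤ t • er} := by
      intro t ht
      by_cases h1 : t • er ≤ es
      · exact Or.inl h1
      · exact Or.inr (hcon t ht h1)
    have htend : ∀ v : Lp ℝ 2 μ,
        Filter.Tendsto (fun n : ℕ => (1 / (n + 1 : ℝ)) • v) Filter.atTop (nhds 0) := by
      intro v
      have h0 : Filter.Tendsto (fun n : ℕ => (1 / (n + 1 : ℝ))) Filter.atTop (nhds 0) :=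
        tendsto_one_div_add_atTop_nhds_zero_nat
      have h1 := h0.smul_const v
      rwa [zero_smul] at h1
    have hne1 : (Set.Ioi (0:ℝ) ∩ {t : ℝ | t • er ≤ es}).Nonempty := by
      by_contra hn
      rw [Set.not_nonempty_iff_eq_empty] at hn
      have hall : ∀ t : ℝ, 0 < t → es ≤ t • er := by
        intro t ht
        rcases hcover ht with h | h
        · exact absurd (Set.mem_inter ht h) (Set.eq_empty_iff_forall_notMem.mp hn t)
        · exact h
      have hle0 : es ≤ 0 := by
        refine le_of_tendsto_of_tendsto' tendsto_const_nhds (htend er) ?_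
        intro n
        exact hall _ (by positivity)
      exact hes' (le_antisymm hle0 hes0)
    have hne2 : (Set.Ioi (0:ℝ) ∩ {t : ℝ | es ≤ t • er}).Nonempty := by
      by_contra hn
      rw [Set.not_nonempty_iff_eq_empty] at hn
      have hall : ∀ t : ℝ, 0 < t → t • er ≤ es := by
        intro t ht
        rcases hcover ht with h | h
        · exact h
        · exact absurd (Set.mem_inter ht h) (Set.eq_empty_iff_forall_notMem.mp hn t)
      have hle0 : er ≤ 0 := by
        refine le_of_tendsto_of_tendsto' tendsto_const_nhds (htend es) ?_
        intro n
        have h2 := hall ((n+1 : ℝ)) (by positivity)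
        have h3 : (0:Lp ℝ 2 μ) ≤ (1 / (n + 1 : ℝ)) • (es - (n + 1 : ℝ) • er) :=
          hsmul0 _ (by positivity) _ (sub_nonneg.mpr h2)
        rw [smul_sub, smul_smul, one_div_mul_cancel (by positivity : (n + 1 : ℝ) ≠ 0),
          one_smul, sub_nonneg] at h3
        exact h3
      exact her' (le_antisymm hle0 her0)
    obtain ⟨t, ht0, ht1, ht2⟩ :=
      isPreconnected_closed_iff.mp isPreconnected_Ioi _ _ hC1 hC2 hcover hne1 hne2
    exact hprop t ht0 (le_antisymm ht2 ht1)
  obtain ⟨t, ht, hnt1, hnt2⟩ := hExists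
  -- the element z and its parts
  set z : Lp ℝ 2 μ := es - t • er with hzdef
  have hzrange : ∃ w, A w = z := by
    obtain ⟨ar, har⟩ := her
    obtain ⟨as', has'⟩ := hes
    exact ⟨as' - t • ar, by rw [map_sub, A.map_smul, har, has']⟩
  have hzp0 : (0:Lp ℝ 2 μ) ≤ z⁺ := posPart_nonneg z
  have hzn0 : (0:Lp ℝ 2 μ) ≤ z⁻ := negPart_nonneg z
  have hzpne : z⁺ ≠ 0 := by
    intro hzz
    exact hnt2 (by rwa [posPart_eq_zero, hzdef, sub_nonpos] at hzz)
  have hznne : z⁻ ≠ 0 := by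
    intro hzz
    exact hnt1 (by
      have := negPart_eq_zero.mp hzz
      rwa [hzdef, sub_nonneg] at this)
  set g : Lp ℝ 2 μ := (A ^ (r - 1)) z⁺ with hgdef
  set h : Lp ℝ 2 μ := (A ^ (r - 1)) z⁻ with hhdef
  have hg0 : 0 ≤ g := hpow_pos _ _ hzp0
  have hh0 : 0 ≤ h := hpow_pos _ _ hzn0
  have hgne : g ≠ 0 := fun hh => hzpne (hkerP _ hh hzp0)
  have hhne : h ≠ 0 := fun hh' => hznne (hkerP _ hh' hzn0)
  -- g - h = z
  have hgz : g - h = z := by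
    rw [hgdef, hhdef, ← map_sub, posPart_sub_negPart]
    obtain ⟨w, hw⟩ := hzrange
    rw [← hw, hfixP]
  -- A^(r-1) fixes h
  have hPh : (A ^ (r - 1)) h = h := by
    obtain ⟨w, hw⟩ := hmem z⁻
    rw [hhdef, ← hw, hfixP]
  -- inf identity: g ⊓ h = h - z⁻
  have hinf1 : g ⊓ h = h - z⁻ := by
    have h1 : g = h + z := by rw [← hgz]; abel
    have h2 : h + z ⊓ 0 = (h + z) ⊓ h := by
      rw [add_inf z 0 h, add_zero]
    rw [h1, ← h2, negPart_eq_neg_inf_zero, sub_neg_eq_add]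
  -- hence A^(r-1)(g ⊓ h) = 0
  have hinf2 : (A ^ (r - 1)) (g ⊓ h) = 0 := by
    rw [hinf1, map_sub, hPh, hhdef, sub_self]
  have hinf0 : g ⊓ h = 0 := hkerP _ hinf2 (le_inf hg0 hh0)
  -- translate to a.e. statements
  have hae : ∀ᵐ x ∂μ, ((g : X → ℝ) x) ⊓ ((h : X → ℝ) x) = 0 ∧
      0 ≤ (g : X → ℝ) x ∧ 0 ≤ (h : X → ℝ) x := by
    have h1 : (⇑(g ⊓ h) : X → ℝ) =ᵐ[μ] ⇑g ⊓ ⇑h := Lp.coeFn_inf g h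
    have h2 : (⇑(g ⊓ h) : X → ℝ) =ᵐ[μ] 0 := by rw [hinf0]; exact Lp.coeFn_zero _ _ _
    have h3 : (0 : X → ℝ) ≤ᵐ[μ] ⇑g := (Lp.coeFn_nonneg g).mpr hg0
    have h4 : (0 : X → ℝ) ≤ᵐ[μ] ⇑h := (Lp.coeFn_nonneg h).mpr hh0
    filter_upwards [h1, h2, h3, h4] with x hx1 hx2 hx3 hx4
    refine ⟨?_, hx3, hx4⟩
    have := hx1.symm.trans hx2
    simpa using this
  refine ⟨g, hmem z⁺, h, hmem z⁻, hgne, hhne, hg0, hh0, ?_⟩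
  have hsubset : Function.support (g : X → ℝ) ∩ Function.support (h : X → ℝ) ⊆
      {x | ¬(((g : X → ℝ) x) ⊓ ((h : X → ℝ) x) = 0 ∧
        0 ≤ (g : X → ℝ) x ∧ 0 ≤ (h : X → ℝ) x)} := by
    rintro x ⟨hxg, hxh⟩
    intro hx
    obtain ⟨hx1, hx2, hx3⟩ := hx
    have hgx : 0 < (g : X → ℝ) x := lt_of_le_of_ne hx2 (Ne.symm hxg)
    have hhx : 0 < (h : X → ℝ) x := lt_of_le_of_ne hx3 (Ne.symm hxh)
    have : (0:ℝ) < ((g : X → ℝ) x) ⊓ ((h : X → ℝ) x) := lt_inf_iff.mpr ⟨hgx, hhx⟩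
    rw [hx1] at this
    exact lt_irrefl 0 this
  exact measure_mono_null hsubset (ae_iff.mp hae)
end

section
/- Let A be a nonnegative bounded linear operator on L²(X) with A^r = A (r ≥ 2) and kernel containing no nonzero nonnegative function. Suppose e_r, e_s ∈ R(A) are nonnegative with μ(Supp e_r ∩ Supp e_s) > 0, μ(Supp e_r \ Supp e_s) > 0, μ(Supp e_s \ Supp e_r) > 0, and the restrictions of e_r and e_s to Supp e_r ∩ Supp e_s are linearly dependent. Then there exist three nonzero nonnegative functions in R(A) with pairwise essentially disjoint supports. -/
/-!
On the common support of `er` and `es` the dependence relation reads `er = c • es` with `c > 0`,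
so `u = er - c • es ∈ R(A)` vanishes there, equals `er` on `Supp er \ Supp es` and `-c • es` on
`Supp es \ Supp er`. Since `A ^ (r - 1)` is a positive projection onto `R(A)` and `A` kills no
nonzero positive vector, `R(A)` is closed under `u ↦ u⁺`. Hence `u⁺`, `u⁺ - u` and `er - u⁺` lie
in `R(A)`, and their supports are exactly the three regions.
-/

open MeasureTheory Function

section PositiveIdempotent

variable {R E : Type*} [Semiring R] [AddCommGroup E] [TopologicalSpace E] [Module R E]
  {A : E →L[R] E}

theorem ContinuousLinearMap.pow_succ_apply_of_pow_eq_self {m : ℕ} (hpot : A ^ (m + 2) = A)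
    {u : E} (hu : u ∈ Set.range A) : (A ^ (m + 1)) u = u := by
  obtain ⟨a, rfl⟩ := hu
  rw [← mul_apply_eq_comp, ← pow_succ, hpot]

variable [Lattice E]

theorem ContinuousLinearMap.pow_apply_nonneg (hA : ∀ f, 0 ≤ f → 0 ≤ A f) (n : ℕ) {f : E}
    (hf : 0 ≤ f) : 0 ≤ (A ^ n) f := by
  induction n with
  | zero => simpa using hf
  | succ n ih => rw [pow_succ', mul_apply_eq_comp]; exact hA _ ih

variable [IsOrderedAddMonoid E]

/-- For the projection `P = A ^ (r - 1)` onto the range of `A`, `P u⁺ ≥ P u = u` and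
`P u⁺ ≥ 0` give `P u⁺ ≥ u⁺`; as `A (P u⁺ - u⁺) = 0`, the kernel condition forces `P u⁺ = u⁺`. -/
theorem ContinuousLinearMap.posPart_mem_range_of_pow_eq_self (hA : ∀ f, 0 ≤ f → 0 ≤ A f)
    {r : ℕ} (hr : 2 ≤ r) (hpot : A ^ r = A) (hker : ∀ h, A h = 0 → 0 ≤ h → h = 0)
    {u : E} (hu : u ∈ Set.range A) : u⁺ ∈ Set.range A := by
  obtain ⟨m, rfl⟩ : ∃ m, r = m + 2 := ⟨r - 2, by omega⟩
  set P := A ^ (m + 1)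
  have hPu : u ≤ P u⁺ := by
    have := A.pow_apply_nonneg hA (m + 1) (sub_nonneg.2 (le_posPart u))
    rwa [map_sub, pow_succ_apply_of_pow_eq_self hpot hu, sub_nonneg] at this
  have hle : u⁺ ≤ P u⁺ := sup_le hPu (A.pow_apply_nonneg hA _ (posPart_nonneg u))
  have hAP : A (P u⁺) = A u⁺ := by rw [← mul_apply_eq_comp, ← pow_succ', hpot]
  have hfix : P u⁺ = u⁺ :=
    sub_eq_zero.1 (hker _ (by rw [map_sub, hAP, sub_self]) (sub_nonneg.2 hle))
  exact ⟨(A ^ m) u⁺, by rw [← mul_apply_eq_comp, ← pow_succ', hfix]⟩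

end PositiveIdempotent

theorem Real.posPart_sub_mul_ne_zero_iff {a b c : ℝ} (ha : 0 ≤ a) (hb : 0 ≤ b) (hc : 0 < c)
    (hab : a ≠ 0 → b ≠ 0 → a = c * b) :
    ((a - c * b)⁺ ≠ 0 ↔ a ≠ 0 ∧ b = 0) ∧
      ((a - c * b)⁺ - (a - c * b) ≠ 0 ↔ b ≠ 0 ∧ a = 0) ∧
      (a - (a - c * b)⁺ ≠ 0 ↔ a ≠ 0 ∧ b ≠ 0) := by
  rcases ha.eq_or_lt with rfl | ha <;> rcases hb.eq_or_lt with rfl | hb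
  · simp
  · have hcb : 0 < c * b := mul_pos hc hb
    simp [hcb.ne', hcb.le, hb.ne']
  · simp [ha.ne', ha.le]
  · simp [← hab ha.ne' hb.ne', ha.ne', hb.ne']

namespace MeasureTheory

variable {X : Type*} [MeasurableSpace X] {μ : Measure X} {p : ENNReal}

theorem Lp.ne_zero_of_support_ae_eq {E : Type*} [NormedAddCommGroup E] {f : Lp E p μ}
    {T : Set X} (hf : support f =ᵐ[μ] T) (hT : μ T ≠ 0) : f ≠ 0 := by
  rintro rfl
  exact hT (by rw [← measure_congr hf]; exact ae_iff.1 (Lp.coeFn_zero E p μ))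

theorem measure_inter_eq_zero_of_ae_eq_of_disjoint {s t s' t' : Set X} (hs : s =ᵐ[μ] s')
    (ht : t =ᵐ[μ] t') (h : Disjoint s' t') : μ (s ∩ t) = 0 := by
  rw [measure_congr (ae_eq_set_inter hs ht), h.inter_eq, measure_empty]

theorem Lp.smul_nonneg {c : ℝ} (hc : 0 ≤ c) {f : Lp ℝ p μ} (hf : 0 ≤ f) : 0 ≤ c • f := by
  refine (Lp.coeFn_nonneg _).1 ?_
  filter_upwards [Lp.coeFn_smul c f, (Lp.coeFn_nonneg f).2 hf] with x hx hfx
  rw [hx, Pi.smul_apply, smul_eq_mul]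
  exact mul_nonneg hc hfx

theorem Lp.coeFn_posPart_ae_eq (u : Lp ℝ p μ) : ⇑u⁺ =ᵐ[μ] fun x => (u x)⁺ := by
  filter_upwards [Lp.coeFn_sup u 0, Lp.coeFn_zero ℝ p μ] with x hsup hzero
  rw [posPart_def, hsup, Pi.sup_apply, hzero, Pi.zero_apply, posPart_def]

theorem Lp.support_posPart_sub_smul_ae_eq {f g : Lp ℝ p μ} (hf : 0 ≤ f) (hg : 0 ≤ g) {c : ℝ}
    (hc : 0 < c) (hfg : ∀ᵐ x ∂μ, f x ≠ 0 → g x ≠ 0 → f x = c * g x) :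
    support ⇑(f - c • g)⁺ =ᵐ[μ] (support f \ support g : Set X) ∧
      support ⇑((f - c • g)⁺ - (f - c • g)) =ᵐ[μ] (support g \ support f : Set X) ∧
      support ⇑(f - (f - c • g)⁺) =ᵐ[μ] (support f ∩ support g : Set X) := by
  have hvals : ∀ᵐ x ∂μ, ((f - c • g)⁺ x ≠ 0 ↔ f x ≠ 0 ∧ g x = 0) ∧
      (((f - c • g)⁺ - (f - c • g)) x ≠ 0 ↔ g x ≠ 0 ∧ f x = 0) ∧
      ((f - (f - c • g)⁺) x ≠ 0 ↔ f x ≠ 0 ∧ g x ≠ 0) := by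
    filter_upwards [(Lp.coeFn_nonneg f).2 hf, (Lp.coeFn_nonneg g).2 hg, hfg,
      Lp.coeFn_sub f (c • g), Lp.coeFn_smul c g, Lp.coeFn_posPart_ae_eq (f - c • g),
      Lp.coeFn_sub (f - c • g)⁺ (f - c • g), Lp.coeFn_sub f (f - c • g)⁺]
      with x hfx hgx hfgx hsub hsmul hpos hsub₁ hsub₂
    have hu : (f - c • g) x = f x - c * g x := by
      rw [hsub, Pi.sub_apply, hsmul, Pi.smul_apply, smul_eq_mul]
    simp only [hsub₁, hsub₂, Pi.sub_apply, hpos, hu]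
    exact Real.posPart_sub_mul_ne_zero_iff hfx hgx hc hfgx
  refine ⟨?_, ?_, ?_⟩ <;> refine Filter.eventuallyEq_set.2 (hvals.mono fun x hx => ?_) <;>
    simp only [Set.mem_sdiff, Set.mem_inter_iff, mem_support, not_not]
  exacts [hx.1, hx.2.1, hx.2.2]

theorem exists_pos_ae_eq_mul_of_dependent_on_support_inter {f g : X → ℝ} (hf : 0 ≤ᵐ[μ] f)
    (hg : 0 ≤ᵐ[μ] g) (hfg : μ (support f ∩ support g) ≠ 0)
    (hdep : ∃ α β : ℝ, (α ≠ 0 ∨ β ≠ 0) ∧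
      (fun x => α * (support f ∩ support g).indicator f x
        + β * (support f ∩ support g).indicator g x) =ᵐ[μ] 0) :
    ∃ c > 0, ∀ᵐ x ∂μ, f x ≠ 0 → g x ≠ 0 → f x = c * g x := by
  obtain ⟨α, β, hαβ, hlin⟩ := hdep
  have hrel : ∀ᵐ x ∂μ, f x ≠ 0 → g x ≠ 0 → α * f x + β * g x = 0 := by
    filter_upwards [hlin] with x hx hfx hgx
    have hmem : x ∈ support f ∩ support g := ⟨hfx, hgx⟩
    simpa [Set.indicator_of_mem hmem] using hx
  obtain ⟨x₀, ⟨hfx₀, hgx₀⟩, hx₀, hf₀, hg₀⟩ :=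
    Measure.exists_mem_of_measure_ne_zero_of_ae hfg (ae_restrict_of_ae (hrel.and (hf.and hg)))
  replace hf₀ : 0 < f x₀ := lt_of_le_of_ne hf₀ (Ne.symm hfx₀)
  replace hg₀ : 0 < g x₀ := lt_of_le_of_ne hg₀ (Ne.symm hgx₀)
  have hα : α ≠ 0 := by
    rintro rfl
    refine hαβ.elim (· rfl) fun hβ => ?_
    simpa [hβ, hg₀.ne'] using hx₀ hfx₀ hgx₀
  refine ⟨-β / α, ?_, hrel.mono fun x hx hfx hgx => ?_⟩
  · have hc : -β / α = f x₀ / g x₀ := by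
      field_simp
      linarith [hx₀ hfx₀ hgx₀]
    rw [hc]
    positivity
  · field_simp
    linarith [hx hfx hgx]

end MeasureTheory

theorem Set.pairwise_disjoint_sdiff_sdiff_inter {α : Type*} (s t : Set α) :
    Pairwise (Disjoint on ![s \ t, t \ s, s ∩ t]) := by
  intro i j hij
  fin_cases i <;> fin_cases j <;> simp_all [onFun, Set.disjoint_left]

theorem stmt11_general {X : Type*} [MeasurableSpace X] (μ : Measure X)
    (A : Lp ℝ 2 μ →L[ℝ] Lp ℝ 2 μ)
    (hpos : ∀ f : Lp ℝ 2 μ, 0 ≤ f → 0 ≤ A f)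
    (r : ℕ) (hr : 2 ≤ r) (hpot : A ^ r = A)
    (hker : ∀ h : Lp ℝ 2 μ, A h = 0 → 0 ≤ h → h = 0)
    (er es : Lp ℝ 2 μ) (her : er ∈ Set.range A) (hes : es ∈ Set.range A)
    (her0 : 0 ≤ er) (hes0 : 0 ≤ es)
    (hcap : 0 < μ (Function.support (er : X → ℝ) ∩ Function.support (es : X → ℝ)))
    (hrs : 0 < μ (Function.support (er : X → ℝ) \ Function.support (es : X → ℝ)))
    (hsr : 0 < μ (Function.support (es : X → ℝ) \ Function.support (er : X → ℝ)))
    (hdep : ∃ α β : ℝ, (α ≠ 0 ∨ β ≠ 0) ∧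
      (fun x => α * (Function.support (er : X → ℝ) ∩
          Function.support (es : X → ℝ)).indicator (er : X → ℝ) x
        + β * (Function.support (er : X → ℝ) ∩
          Function.support (es : X → ℝ)).indicator (es : X → ℝ) x) =ᵐ[μ] 0) :
    ∃ f : Fin 3 → Lp ℝ 2 μ,
      (∀ i, f i ∈ Set.range A) ∧ (∀ i, f i ≠ 0) ∧ (∀ i, 0 ≤ f i) ∧
      ∀ i j, i ≠ j →
        μ (Function.support (f i : X → ℝ) ∩ Function.support (f j : X → ℝ)) = 0 := by
  obtain ⟨c, hc, hrel⟩ := exists_pos_ae_eq_mul_of_dependent_on_support_inter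
    ((Lp.coeFn_nonneg er).2 her0) ((Lp.coeFn_nonneg es).2 hes0) hcap.ne' hdep
  obtain ⟨a, rfl⟩ := her
  obtain ⟨b, rfl⟩ := hes
  set u := A a - c • A b
  have hu : A (a - c • b) = u := by rw [map_sub, map_smul]
  obtain ⟨w, hw⟩ := A.posPart_mem_range_of_pow_eq_self hpos hr hpot hker ⟨_, hu⟩
  set f : Fin 3 → Lp ℝ 2 μ := ![u⁺, u⁺ - u, A a - u⁺]
  set T : Fin 3 → Set X := ![support ⇑(A a) \ support ⇑(A b), support ⇑(A b) \ support ⇑(A a),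
    support ⇑(A a) ∩ support ⇑(A b)]
  have hsupp : ∀ i, support ⇑(f i) =ᵐ[μ] T i := by
    obtain ⟨h₀, h₁, h₂⟩ := Lp.support_posPart_sub_smul_ae_eq her0 hes0 hc hrel
    intro i; fin_cases i
    exacts [h₀, h₁, h₂]
  have hT : ∀ i, μ (T i) ≠ 0 := by
    intro i; fin_cases i
    exacts [hrs.ne', hsr.ne', hcap.ne']
  refine ⟨f, fun i => ?_, fun i => Lp.ne_zero_of_support_ae_eq (hsupp i) (hT i),
    fun i => ?_, fun i j hij => measure_inter_eq_zero_of_ae_eq_of_disjoint (hsupp i) (hsupp j)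
      (Set.pairwise_disjoint_sdiff_sdiff_inter _ _ hij)⟩
  · fin_cases i
    exacts [⟨w, hw⟩, ⟨w - (a - c • b), by rw [map_sub, hw, hu]; rfl⟩,
      ⟨a - w, by rw [map_sub, hw]; rfl⟩]
  · fin_cases i
    exacts [posPart_nonneg u, sub_nonneg.2 (le_posPart u),
      sub_nonneg.2 (sup_le (sub_le_self _ (Lp.smul_nonneg hc.le hes0)) her0)]

theorem stmt11 {X : Type*} [MeasurableSpace X] (μ : Measure X) [IsFiniteMeasure μ]
    (A : Lp ℝ 2 μ →L[ℝ] Lp ℝ 2 μ)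
    (hpos : ∀ f : Lp ℝ 2 μ, 0 ≤ f → 0 ≤ A f)
    (r : ℕ) (hr : 2 ≤ r) (hpot : A ^ r = A)
    (hker : ∀ h : Lp ℝ 2 μ, A h = 0 → 0 ≤ h → h = 0)
    (er es : Lp ℝ 2 μ) (her : er ∈ Set.range A) (hes : es ∈ Set.range A)
    (her0 : 0 ≤ er) (hes0 : 0 ≤ es)
    (hcap : 0 < μ (Function.support (er : X → ℝ) ∩ Function.support (es : X → ℝ)))
    (hrs : 0 < μ (Function.support (er : X → ℝ) \ Function.support (es : X → ℝ)))
    (hsr : 0 < μ (Function.support (es : X → ℝ) \ Function.support (er : X → ℝ)))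
    (hdep : ∃ α β : ℝ, (α ≠ 0 ∨ β ≠ 0) ∧
      (fun x => α * (Function.support (er : X → ℝ) ∩
          Function.support (es : X → ℝ)).indicator (er : X → ℝ) x
        + β * (Function.support (er : X → ℝ) ∩
          Function.support (es : X → ℝ)).indicator (es : X → ℝ) x) =ᵐ[μ] 0) :
    ∃ f : Fin 3 → Lp ℝ 2 μ,
      (∀ i, f i ∈ Set.range A) ∧ (∀ i, f i ≠ 0) ∧ (∀ i, 0 ≤ f i) ∧
      ∀ i j, i ≠ j →
        μ (Function.support (f i : X → ℝ) ∩ Function.support (f j : X → ℝ)) = 0 :=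
  stmt11_general μ A hpos r hr hpot hker er es her hes her0 hes0 hcap hrs hsr hdep
end

section
/- Let A be a nonnegative compact linear operator on L²(X) with A^r = A (r ≥ 2) whose kernel contains no nonzero nonnegative function. Then the range R(A) admits a basis e₁, …, e_N consisting of nonnegative functions with pairwise essentially disjoint supports (equivalently, pairwise orthogonal nonnegative functions). -/
/-!
Put `P = A ^ (r - 1)`: a positive idempotent whose fixed points are exactly `V = R(A)`. For
`x, y ∈ V` positivity gives `P (x ⊓ y) ≤ x ⊓ y`, and `P` kills the nonnegative difference, so it
vanishes: `V` is a sublattice of `L²`. It is finite dimensional because `P` is compact and is the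
identity on `V`.

In a finite-dimensional sublattice `V`, choose `u ≥ 0`, `u ≠ 0`, such that the elements of `V`
vanishing wherever `u` does form a subspace of least dimension. Then every nonzero
`0 ≤ w ≤ u` in `V` has the same support as `u`; applied to `w = (t u - h)⁺ ⊓ u` this shows that
each `h ∈ V` is a multiple of `u` on the support of `u`. Hence
`V = ℝ u ⊕ {h ∈ V | h = 0 on supp u}`, and induction on the dimension yields the basis.
-/

open MeasureTheory Filter Set Function
open scoped ENNReal

theorem IsCompactOperator.finiteDimensional_eigenspace {𝕜 E : Type*} [NontriviallyNormedField 𝕜]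
    [CompleteSpace 𝕜] [NormedAddCommGroup E] [NormedSpace 𝕜 E] {T : E →L[𝕜] E}
    (hT : IsCompactOperator T) {c : 𝕜} (hc : c ≠ 0) :
    FiniteDimensional 𝕜 (Module.End.eigenspace (T : E →ₗ[𝕜] E) c) := by
  set W := Module.End.eigenspace (T : E →ₗ[𝕜] E) c
  have hTW : ∀ v ∈ W, (T : E →ₗ[𝕜] E) v ∈ W := fun v hv => by
    rw [Module.End.mem_eigenspace_iff.mp hv]
    exact W.smul_mem c hv
  have hW : IsClosed (W : Set E) := by
    convert isClosed_eq T.continuous (continuous_const_smul c) using 1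
    ext v
    exact Module.End.mem_eigenspace_iff
  have hrestrict : ⇑((T : E →ₗ[𝕜] E).restrict hTW) = c • id := by
    funext v
    exact Subtype.ext (Module.End.mem_eigenspace_iff.mp v.2)
  apply FiniteDimensional.of_isCompactOperator_id (𝕜 := 𝕜)
  rw [← IsCompactOperator.smul_iff₀ hc, ← hrestrict]
  exact hT.restrict hTW hW

theorem infClosed_fixedPoints {E F : Type*} [AddCommGroup E] [Lattice E] [IsOrderedAddMonoid E]
    [FunLike F E E] [AddMonoidHomClass F E E] {P : F} (hpos : ∀ f, 0 ≤ f → 0 ≤ P f)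
    (hidem : ∀ f, P (P f) = P f) (hker : ∀ f, P f = 0 → 0 ≤ f → f = 0) :
    InfClosed (fixedPoints P) := by
  intro f hf g hg
  have hmono : Monotone P := fun a b hab => by
    simpa [map_sub] using hpos (b - a) (sub_nonneg.mpr hab)
  have hle : P (f ⊓ g) ≤ f ⊓ g :=
    le_inf ((hmono inf_le_left).trans_eq hf) ((hmono inf_le_right).trans_eq hg)
  exact (sub_eq_zero.mp (hker _ (by rw [map_sub, hidem, sub_self]) (sub_nonneg.mpr hle))).symm

theorem InfClosed.supClosed_of_neg_mem {G : Type*} [AddCommGroup G] [Lattice G]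
    [IsOrderedAddMonoid G] {s : Set G} (hs : InfClosed s) (hneg : ∀ x ∈ s, -x ∈ s) :
    SupClosed s := fun x hx y hy => by
  simpa [neg_inf] using hneg _ (hs (hneg x hx) (hneg y hy))

theorem Fin.pairwise_cons {α : Type*} {R : α → α → Prop} {n : ℕ} {u : α} {f : Fin n → α}
    (hu : ∀ i, R u (f i) ∧ R (f i) u) (hf : Pairwise fun i j => R (f i) (f j)) :
    Pairwise fun i j =>
      R ((Fin.cons u f : Fin (n + 1) → α) i) ((Fin.cons u f : Fin (n + 1) → α) j) := by
  intro i j hij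
  cases i using Fin.cases <;> cases j using Fin.cases
  · exact absurd rfl hij
  · exact (hu _).1
  · exact (hu _).2
  · exact hf (fun h => hij (congrArg Fin.succ h))

namespace ContinuousLinearMap

variable {R E : Type*} [Semiring R] [TopologicalSpace E] [AddCommGroup E] [Module R E]
  {A : E →L[R] E}

theorem pow_apply_nonneg_s13 [Preorder E] (hA : ∀ f, 0 ≤ f → 0 ≤ A f) (n : ℕ) (f : E) (hf : 0 ≤ f) :
    0 ≤ (A ^ n) f := by
  induction n generalizing f with
  | zero => exact hf
  | succ n ih => exact ih _ (hA f hf)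

theorem range_eq_fixedPoints_pow {n : ℕ} (hA : A ^ (n + 2) = A) :
    (LinearMap.range (A : E →ₗ[R] E) : Set E) = fixedPoints ⇑(A ^ (n + 1)) := by
  ext f
  refine ⟨fun ⟨g, hg⟩ => hg ▸ ?_, fun hf => ⟨(A ^ n) f, ?_⟩⟩
  · change (A ^ (n + 1) * A) g = A g
    rw [← pow_succ, hA]
  · change (A * A ^ n) f = f
    rwa [← pow_succ']

theorem infClosed_range_of_pow_eq [Lattice E] [IsOrderedAddMonoid E] {n : ℕ}
    (hpos : ∀ f, 0 ≤ f → 0 ≤ A f) (hker : ∀ f, A f = 0 → 0 ≤ f → f = 0)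
    (hA : A ^ (n + 2) = A) : InfClosed (LinearMap.range (A : E →ₗ[R] E) : Set E) := by
  have hAP : A * A ^ (n + 1) = A := by rw [← pow_succ', hA]
  have hPP : A ^ (n + 1) * A ^ (n + 1) = A ^ (n + 1) := by
    nth_rw 1 [pow_succ A n]
    rw [mul_assoc, hAP, ← pow_succ]
  rw [range_eq_fixedPoints_pow hA]
  refine infClosed_fixedPoints (pow_apply_nonneg_s13 hpos _) (fun f => congr($hPP f))
    fun f hPf => hker f ?_
  calc A f = A ((A ^ (n + 1)) f) := congr($hAP f).symm
    _ = 0 := by rw [hPf, map_zero]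

end ContinuousLinearMap

theorem IsCompactOperator.finiteDimensional_range_of_pow_eq {𝕜 E : Type*}
    [NontriviallyNormedField 𝕜] [CompleteSpace 𝕜] [NormedAddCommGroup E] [NormedSpace 𝕜 E]
    {A : E →L[𝕜] E} (hA : IsCompactOperator A) {n : ℕ} (hpow : A ^ (n + 2) = A) :
    FiniteDimensional 𝕜 (LinearMap.range (A : E →ₗ[𝕜] E)) := by
  have hP : IsCompactOperator (A ^ (n + 1)) := by
    rw [pow_succ]
    exact hA.clm_comp (A ^ n)
  have := hP.finiteDimensional_eigenspace one_ne_zero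
  refine Submodule.finiteDimensional_of_le
    (S₂ := Module.End.eigenspace ((A ^ (n + 1) : E →L[𝕜] E) : E →ₗ[𝕜] E) 1)
    fun f hf => Module.End.mem_eigenspace_iff.mpr ?_
  rw [one_smul]
  exact (ContinuousLinearMap.range_eq_fixedPoints_pow hpow).subset hf

namespace MeasureTheory

theorem isClosed_setOf_ae_mem {α β : Type*} [MeasurableSpace α] {μ : Measure α}
    [TopologicalSpace β] [SequentialSpace β] {C : α → Set β} (hC : ∀ x, IsClosed (C x)) :
    IsClosed {t | ∀ᵐ x ∂μ, t ∈ C x} := by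
  refine IsSeqClosed.isClosed fun τ t hτ hlim => ?_
  filter_upwards [ae_all_iff.mpr hτ] with x hx
  exact (hC x).mem_of_tendsto hlim (Eventually.of_forall hx)

theorem ae_eq_zero_of_forall_nat_mul_le {α : Type*} [MeasurableSpace α] {μ : Measure α}
    {u g : α → ℝ} (hu : 0 ≤ᵐ[μ] u) (h : ∀ n : ℕ, ∀ᵐ x ∂μ, u x ≠ 0 → n * u x ≤ g x) :
    u =ᵐ[μ] 0 := by
  filter_upwards [hu, ae_all_iff.mpr h] with x hux hx
  by_contra hne
  obtain ⟨n, hn⟩ := exists_nat_gt (g x / u x)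
  rw [div_lt_iff₀ (lt_of_le_of_ne hux (Ne.symm hne))] at hn
  linarith [hx n hne]

end MeasureTheory

namespace MeasureTheory.Lp

variable {α : Type*} [MeasurableSpace α] {μ : Measure α} {p : ℝ≥0∞}

def vanishingOn (s : Set α) : Submodule ℝ (Lp ℝ p μ) where
  carrier := {f | ∀ᵐ x ∂μ, x ∈ s → f x = 0}
  zero_mem' := by
    filter_upwards [coeFn_zero ℝ p μ] with x hx _ using hx
  add_mem' {f g} hf hg := by
    rw [Set.mem_ofPred_eq] at hf hg ⊢
    filter_upwards [coeFn_add f g, hf, hg] with x hx hfx hgx hs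
    rw [hx, Pi.add_apply, hfx hs, hgx hs, add_zero]
  smul_mem' c f hf := by
    rw [Set.mem_ofPred_eq] at hf ⊢
    filter_upwards [coeFn_smul c f, hf] with x hx hfx hs
    rw [hx, Pi.smul_apply, hfx hs, smul_zero]

theorem mem_vanishingOn {s : Set α} {f : Lp ℝ p μ} :
    f ∈ vanishingOn s ↔ ∀ᵐ x ∂μ, x ∈ s → f x = 0 := Iff.rfl

theorem infClosed_vanishingOn (s : Set α) :
    InfClosed ((vanishingOn s : Submodule ℝ (Lp ℝ p μ)) : Set (Lp ℝ p μ)) := fun f hf g hg => by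
  filter_upwards [coeFn_inf f g, mem_vanishingOn.mp hf, mem_vanishingOn.mp hg] with x hx hfx hgx hs
  simp [hx, hfx hs, hgx hs]

theorem notMem_vanishingOn_support {f : Lp ℝ p μ} (hf : f ≠ 0) :
    f ∉ vanishingOn (support f) := fun hmem => hf <| by
  rw [eq_zero_iff_ae_eq_zero]
  filter_upwards [mem_vanishingOn.mp hmem] with x hx
  by_contra hne
  exact hne (hx hne)

structure IsMinimalSupport (V : Submodule ℝ (Lp ℝ p μ)) (u : Lp ℝ p μ) : Prop where
  mem : u ∈ V
  nonneg : 0 ≤ u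
  ne_zero : u ≠ 0
  ae_eq_zero : ∀ w ∈ V, 0 ≤ w → w ≤ u → w ≠ 0 → ∀ᵐ x ∂μ, w x = 0 → u x = 0

theorem exists_isMinimalSupport {V : Submodule ℝ (Lp ℝ p μ)} [FiniteDimensional ℝ V]
    (hV : InfClosed (V : Set (Lp ℝ p μ))) (hV0 : V ≠ ⊥) : ∃ u, IsMinimalSupport V u := by
  obtain ⟨v, hvV, hv0⟩ := Submodule.exists_mem_ne_zero_of_ne_bot hV0
  have habs : |v| ∈ V :=
    hV.supClosed_of_neg_mem (fun x hx => V.neg_mem hx) hvV (V.neg_mem hvV)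
  have habs0 : |v| ≠ 0 := fun h =>
    hv0 (le_antisymm (le_sup_left.trans h.le) (neg_nonpos.mp (le_sup_right.trans h.le)))
  obtain ⟨u, ⟨huV, hu0, hune⟩, hmin⟩ :=
    (measure fun u : Lp ℝ p μ => Module.finrank ℝ ↥(V ⊓ vanishingOn {x | u x = 0})).wf.has_min
      {u | u ∈ V ∧ 0 ≤ u ∧ u ≠ 0} ⟨|v|, habs, abs_nonneg v, habs0⟩
  refine ⟨u, huV, hu0, hune, fun w hwV hw0 hwu hwne => ?_⟩
  have hle : V ⊓ vanishingOn {x | w x = 0} ≤ V ⊓ vanishingOn {x | u x = 0} := by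
    rintro h ⟨hhV, hh⟩
    refine ⟨hhV, ?_⟩
    filter_upwards [mem_vanishingOn.mp hh, (coeFn_nonneg w).mpr hw0, (coeFn_le w u).mpr hwu]
      with x hx hw0x hwux hux
    exact hx (le_antisymm (hwux.trans_eq hux) hw0x)
  have heq := Submodule.eq_of_le_of_finrank_le hle (not_lt.mp (hmin w ⟨hwV, hw0, hwne⟩))
  have hu : u ∈ V ⊓ vanishingOn {x | w x = 0} := heq ▸ ⟨huV, ae_of_all _ fun x hx => hx⟩
  exact hu.2

variable {V : Submodule ℝ (Lp ℝ p μ)} {u : Lp ℝ p μ}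

theorem IsMinimalSupport.ae_le_or_ae_le (hV : InfClosed (V : Set (Lp ℝ p μ)))
    (hu : IsMinimalSupport V u) {h : Lp ℝ p μ} (hh : h ∈ V) (t : ℝ) :
    (∀ᵐ x ∂μ, u x ≠ 0 → t * u x ≤ h x) ∨ (∀ᵐ x ∂μ, u x ≠ 0 → h x ≤ t * u x) := by
  have hw : ∀ᵐ x ∂μ, (((t • u - h) ⊔ 0) ⊓ u) x = min (max (t * u x - h x) 0) (u x) := by
    filter_upwards [coeFn_inf ((t • u - h) ⊔ 0) u, coeFn_sup (t • u - h) 0,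
      coeFn_sub (t • u) h, coeFn_smul t u, coeFn_zero ℝ p μ] with x h1 h2 h3 h4 h5
    simp only [h1, Pi.inf_apply, h2, Pi.sup_apply, h3, Pi.sub_apply, h4, Pi.smul_apply, h5,
      Pi.zero_apply, smul_eq_mul]
  set w := ((t • u - h) ⊔ 0) ⊓ u
  have hu0 := (coeFn_nonneg u).mpr hu.nonneg
  by_cases hw0 : w = 0
  · left
    filter_upwards [hw, hu0, eq_zero_iff_ae_eq_zero.mp hw0] with x hwx hux hw0x hne
    have hux' : 0 < u x := lt_of_le_of_ne hux (Ne.symm hne)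
    have : min (max (t * u x - h x) 0) (u x) = 0 := hwx ▸ hw0x
    grind
  · right
    have hwV : w ∈ V :=
      hV (hV.supClosed_of_neg_mem (fun _ => V.neg_mem)
        (V.sub_mem (V.smul_mem t hu.mem) hh) V.zero_mem) hu.mem
    filter_upwards [hw, hu0, hu.ae_eq_zero w hwV (le_inf le_sup_right hu.nonneg) inf_le_right hw0]
      with x hwx hux hx hne
    have hux' : 0 ≤ u x := hux
    have : min (max (t * u x - h x) 0) (u x) ≠ 0 := hwx ▸ mt hx hne
    grind

theorem IsMinimalSupport.exists_ae_eq_smul (hV : InfClosed (V : Set (Lp ℝ p μ)))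
    (hu : IsMinimalSupport V u) {h : Lp ℝ p μ} (hh : h ∈ V) :
    ∃ c : ℝ, ∀ᵐ x ∂μ, u x ≠ 0 → h x = c * u x := by
  set L := {t : ℝ | ∀ᵐ x ∂μ, u x ≠ 0 → t * u x ≤ h x}
  set U := {t : ℝ | ∀ᵐ x ∂μ, u x ≠ 0 → h x ≤ t * u x}
  have hcover (t : ℝ) : t ∈ L ∨ t ∈ U := hu.ae_le_or_ae_le hV hh t
  have hu0 : ¬ u =ᵐ[μ] 0 := fun h0 => hu.ne_zero (eq_zero_iff_ae_eq_zero.mpr h0)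
  have hunonneg := (coeFn_nonneg u).mpr hu.nonneg
  have hL : L.Nonempty := by
    by_contra hL
    refine hu0 (ae_eq_zero_of_forall_nat_mul_le hunonneg (g := -h) fun n => ?_)
    filter_upwards [(hcover (-n)).resolve_left fun ht => hL ⟨_, ht⟩] with x hx hne
    linarith [hx hne, show -(n : ℝ) * u x = -(n * u x) by ring, Pi.neg_apply h x]
  have hU : U.Nonempty := by
    by_contra hU
    exact hu0 (ae_eq_zero_of_forall_nat_mul_le hunonneg fun n =>
      (hcover n).resolve_right fun ht => hU ⟨_, ht⟩)
  obtain ⟨c, -, hcL, hcU⟩ := isPreconnected_closed_iff.mp isPreconnected_univ L U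
    (isClosed_setOf_ae_mem fun _ =>
      isClosed_imp isOpen_const (isClosed_le (by fun_prop) continuous_const))
    (isClosed_setOf_ae_mem fun _ =>
      isClosed_imp isOpen_const (isClosed_le continuous_const (by fun_prop)))
    (fun t _ => hcover t) (by simpa using hL) (by simpa using hU)
  exact ⟨c, by filter_upwards [hcL, hcU] with x h1 h2 hne using le_antisymm (h2 hne) (h1 hne)⟩

theorem IsMinimalSupport.span_sup_eq (hV : InfClosed (V : Set (Lp ℝ p μ)))
    (hu : IsMinimalSupport V u) : Submodule.span ℝ {u} ⊔ (V ⊓ vanishingOn (support u)) = V := by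
  refine le_antisymm (sup_le ((Submodule.span_singleton_le_iff_mem u V).mpr hu.mem) inf_le_left)
    fun h hh => ?_
  obtain ⟨c, hc⟩ := hu.exists_ae_eq_smul hV hh
  have hrest : h - c • u ∈ V ⊓ vanishingOn (support u) := by
    refine ⟨V.sub_mem hh (V.smul_mem c hu.mem), ?_⟩
    filter_upwards [coeFn_sub h (c • u), coeFn_smul c u, hc] with x h1 h2 hx hne
    rw [h1, Pi.sub_apply, h2, Pi.smul_apply, smul_eq_mul, hx hne, sub_self]
  rw [← add_sub_cancel (c • u) h]
  exact Submodule.add_mem_sup (Submodule.smul_mem _ c (Submodule.mem_span_singleton_self u)) hrest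

theorem exists_linearIndependent_nonneg_disjoint_span_eq (V : Submodule ℝ (Lp ℝ p μ))
    [FiniteDimensional ℝ V] (hV : InfClosed (V : Set (Lp ℝ p μ))) :
    ∃ (k : ℕ) (f : Fin k → Lp ℝ p μ), LinearIndependent ℝ f ∧
      Submodule.span ℝ (range f) = V ∧ (∀ i, 0 ≤ f i) ∧
      Pairwise fun i j => ∀ᵐ x ∂μ, f i x = 0 ∨ f j x = 0 := by
  induction hn : Module.finrank ℝ V using Nat.strong_induction_on generalizing V with
  | _ n ih =>
  rcases eq_or_ne V ⊥ with rfl | hV0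
  · exact ⟨0, Fin.elim0, linearIndependent_empty_type, by simp, fun i => i.elim0, fun i => i.elim0⟩
  obtain ⟨u, hu⟩ := exists_isMinimalSupport hV hV0
  set W := V ⊓ vanishingOn (support u)
  have hWV : W < V := lt_of_le_of_ne inf_le_left fun h =>
    notMem_vanishingOn_support hu.ne_zero (h ▸ hu.mem : u ∈ W).2
  obtain ⟨k, f, hli, hspan, hf0, hdisj⟩ := ih _ (hn ▸ Submodule.finrank_lt_finrank_of_lt hWV) W
    (hV.inter (infClosed_vanishingOn _)) rfl
  have hfW (i : Fin k) : f i ∈ W := hspan ▸ Submodule.subset_span (mem_range_self i)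
  refine ⟨k + 1, Fin.cons u f, ?_, ?_, ?_, ?_⟩
  · exact linearIndependent_finCons.mpr
      ⟨hli, hspan ▸ fun h => notMem_vanishingOn_support hu.ne_zero h.2⟩
  · rw [Fin.range_cons, Submodule.span_insert, hspan, hu.span_sup_eq hV]
  · exact Fin.cases hu.nonneg hf0
  · refine Fin.pairwise_cons (R := fun a b : Lp ℝ p μ => ∀ᵐ x ∂μ, a x = 0 ∨ b x = 0)
      (fun i => ?_) hdisj
    have h : ∀ᵐ x ∂μ, u x = 0 ∨ f i x = 0 := by
      filter_upwards [mem_vanishingOn.mp (hfW i).2] with x hx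
      exact or_iff_not_imp_left.mpr hx
    exact ⟨h, h.mono fun x => Or.symm⟩

theorem exists_basis_nonneg_disjoint (V : Submodule ℝ (Lp ℝ p μ)) [FiniteDimensional ℝ V]
    (hV : InfClosed (V : Set (Lp ℝ p μ))) :
    ∃ (N : ℕ) (b : Module.Basis (Fin N) ℝ V), (∀ i, 0 ≤ (b i : Lp ℝ p μ)) ∧
      Pairwise fun i j => ∀ᵐ x ∂μ, (b i : Lp ℝ p μ) x = 0 ∨ (b j : Lp ℝ p μ) x = 0 := by
  obtain ⟨k, f, hli, hspan, hf0, hdisj⟩ :=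
    exists_linearIndependent_nonneg_disjoint_span_eq V hV
  refine ⟨k, (Module.Basis.span hli).map (LinearEquiv.ofEq _ _ hspan), ?_⟩
  simpa using ⟨hf0, hdisj⟩

end MeasureTheory.Lp

theorem stmt13_general {X : Type*} [MeasurableSpace X] (μ : Measure X)
    (A : Lp ℝ 2 μ →L[ℝ] Lp ℝ 2 μ) (hcompact : IsCompactOperator A)
    (hpos : ∀ f : Lp ℝ 2 μ, 0 ≤ f → 0 ≤ A f)
    (r : ℕ) (hr : 2 ≤ r) (hpot : A ^ r = A)
    (hker : ∀ h : Lp ℝ 2 μ, A h = 0 → 0 ≤ h → h = 0) :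
    ∃ (N : ℕ) (b : Module.Basis (Fin N) ℝ (LinearMap.range (A : Lp ℝ 2 μ →ₗ[ℝ] Lp ℝ 2 μ))),
      (∀ j, 0 ≤ (b j : Lp ℝ 2 μ)) ∧
      ∀ i j, i ≠ j →
        μ (Function.support ((b i : Lp ℝ 2 μ) : X → ℝ) ∩
           Function.support ((b j : Lp ℝ 2 μ) : X → ℝ)) = 0 := by
  obtain ⟨n, rfl⟩ : ∃ n, r = n + 2 := ⟨r - 2, by omega⟩
  have := hcompact.finiteDimensional_range_of_pow_eq hpot
  obtain ⟨N, b, hb0, hbd⟩ :=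
    Lp.exists_basis_nonneg_disjoint _ (A.infClosed_range_of_pow_eq hpos hker hpot)
  refine ⟨N, b, hb0, fun i j hij => ?_⟩
  simpa [ae_iff, not_or, Function.support, Set.inter_def] using hbd hij

theorem stmt13 {X : Type*} [MeasurableSpace X] (μ : Measure X) [IsFiniteMeasure μ]
    (A : Lp ℝ 2 μ →L[ℝ] Lp ℝ 2 μ) (hcompact : IsCompactOperator A)
    (hpos : ∀ f : Lp ℝ 2 μ, 0 ≤ f → 0 ≤ A f)
    (r : ℕ) (hr : 2 ≤ r) (hpot : A ^ r = A)
    (hker : ∀ h : Lp ℝ 2 μ, A h = 0 → 0 ≤ h → h = 0) :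
    ∃ (N : ℕ) (b : Module.Basis (Fin N) ℝ (LinearMap.range (A : Lp ℝ 2 μ →ₗ[ℝ] Lp ℝ 2 μ))),
      (∀ j, 0 ≤ (b j : Lp ℝ 2 μ)) ∧
      ∀ i j, i ≠ j →
        μ (Function.support ((b i : Lp ℝ 2 μ) : X → ℝ) ∩
           Function.support ((b j : Lp ℝ 2 μ) : X → ℝ)) = 0 :=
  stmt13_general μ A hcompact hpos r hr hpot hker
end

section
/- Let A be a nonnegative bounded linear operator on L²(X) with A^r = A (r ≥ 2), and let e₁, …, e_N be a basis of the range of A consisting of nonnegative functions with pairwise essentially disjoint supports. Then for each i there is a unique index j and a scalar α > 0 with A eᵢ = α eⱼ (A permutes the one-dimensional spans of the basis functions up to positive scalars). -/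
/-! On `R(A) = span e` the identity `A ^ r = A` makes `A ^ (r - 1)` the identity, so the matrix
`M` of `A` restricted to `R(A)` in the basis `e` satisfies `M ^ (r - 1) = 1`. Because the `eᵢ` are
nonnegative with essentially disjoint supports, a nonnegative combination of them has nonnegative
coefficients; hence `M` and its inverse `M ^ (r - 2)` are entrywise nonnegative. A nonnegative
matrix with a nonnegative inverse has exactly one nonzero entry in each column. -/

open MeasureTheory

theorem MeasureTheory.Lp.coeff_nonneg_of_sum_smul_nonneg {X ι : Type*} [MeasurableSpace X]
    {μ : Measure X} {p : ENNReal} [Fintype ι] {e : ι → Lp ℝ p μ} {j : ι}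
    (hj0 : 0 ≤ e j) (hj : e j ≠ 0)
    (hdisj : ∀ k ≠ j, μ (Function.support (e j) ∩ Function.support (e k)) = 0)
    {c : ι → ℝ} (h : 0 ≤ ∑ k, c k • e k) : 0 ≤ c j := by
  by_contra! hcj
  refine hj (Lp.eq_zero_iff_ae_eq_zero.2 ?_)
  have hsmul : ∀ᵐ x ∂μ, ∀ k, (c k • e k) x = c k * e k x :=
    ae_all_iff.2 fun k => Lp.coeFn_smul _ _
  have hoff : ∀ᵐ x ∂μ, ∀ k ≠ j, e j x ≠ 0 → e k x = 0 := by
    refine ae_all_iff.2 fun k => ?_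
    by_cases hk : k = j
    · exact .of_forall fun _ hkj => absurd hk hkj
    · filter_upwards [measure_eq_zero_iff_ae_notMem.1 (hdisj k hk)] with x hx _ hjx
      exact Function.notMem_support.1 fun hkx => hx ⟨hjx, hkx⟩
  filter_upwards [(Lp.coeFn_nonneg _).2 h, (Lp.coeFn_nonneg _).2 hj0,
    Lp.coeFn_fun_finsetSum Finset.univ (fun k => c k • e k), hsmul, hoff]
    with x hsum_nonneg hjx hsum hsmul hoff
  rw [Pi.zero_apply] at hsum_nonneg hjx ⊢
  by_contra hx0
  have hsum_eq : (∑ k, c k • e k) x = c j * e j x := by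
    rw [hsum, Finset.sum_eq_single j (fun k _ hk => by rw [hsmul, hoff k hk hx0, mul_zero])
      (by simp), hsmul]
  have : c j * e j x < 0 := mul_neg_of_neg_of_pos hcj (lt_of_le_of_ne hjx (Ne.symm hx0))
  linarith

namespace Matrix

variable {n α : Type*} [Fintype n] [Semiring α] [PartialOrder α]

theorem mul_apply_pos [IsStrictOrderedRing α] {D E : Matrix n n α}
    (hD : ∀ a b, 0 ≤ D a b) (hE : ∀ a b, 0 ≤ E a b) {a k b : n}
    (hDk : 0 < D a k) (hEk : 0 < E k b) : 0 < (D * E) a b :=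
  (mul_pos hDk hEk).trans_le <|
    Finset.single_le_sum (fun l _ => mul_nonneg (hD a l) (hE l b)) (Finset.mem_univ k)

theorem exists_pos_mul_pos_of_mul_apply_ne_zero {D E : Matrix n n α}
    (hD : ∀ a b, 0 ≤ D a b) (hE : ∀ a b, 0 ≤ E a b) {a b : n} (h : (D * E) a b ≠ 0) :
    ∃ k, 0 < D a k ∧ 0 < E k b := by
  obtain ⟨k, -, hk⟩ := Finset.exists_ne_zero_of_sum_ne_zero h
  exact ⟨k, (hD a k).lt_of_ne' (left_ne_zero_of_mul hk),
    (hE k b).lt_of_ne' (right_ne_zero_of_mul hk)⟩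

theorem exists_pos_forall_ne_eq_zero_of_nonneg_inverse [IsStrictOrderedRing α] [DecidableEq n]
    {B C : Matrix n n α}
    (hB : ∀ a b, 0 ≤ B a b) (hC : ∀ a b, 0 ≤ C a b) (hBC : B * C = 1) (hCB : C * B = 1)
    (i : n) : ∃ j, 0 < B j i ∧ ∀ k ≠ j, B k i = 0 := by
  have eq_of_one_pos {a b : n} (h : (0 : α) < (1 : Matrix n n α) a b) : a = b := by
    by_contra hab
    exact h.ne' (one_apply_ne hab)
  obtain ⟨j, -, hBji⟩ := exists_pos_mul_pos_of_mul_apply_ne_zero hC hB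
    (by simp [hCB] : (C * B) i i ≠ 0)
  refine ⟨j, hBji, fun k hkj => ?_⟩
  by_contra hBki
  obtain ⟨m, -, hCmk⟩ := exists_pos_mul_pos_of_mul_apply_ne_zero hB hC
    (by simp [hBC] : (B * C) k k ≠ 0)
  obtain rfl : m = i :=
    eq_of_one_pos (hCB ▸ mul_apply_pos hC hB hCmk ((hB k i).lt_of_ne' hBki))
  exact hkj (eq_of_one_pos (hBC ▸ mul_apply_pos hB hC hBji hCmk)).symm

end Matrix

theorem Module.End.pow_pred_apply_of_pow_eq_self {R M : Type*} [Semiring R] [AddCommMonoid M]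
    [Module R M] {f : Module.End R M} {r : ℕ} (h : f ^ r = f) {v : M}
    (hv : v ∈ LinearMap.range f) : (f ^ (r - 1)) v = v := by
  obtain ⟨w, rfl⟩ := hv
  rcases r with _ | r
  · simp
  · rw [Nat.add_sub_cancel, ← Module.End.mul_apply, ← pow_succ, h]

theorem LinearMap.apply_eq_sum_toMatrix_restrict_span {R M ι : Type*} [CommRing R]
    [AddCommGroup M] [Module R M] [Fintype ι] [DecidableEq ι] {e : ι → M}
    (hli : LinearIndependent R e) (f : M →ₗ[R] M)
    (hf : ∀ x ∈ Submodule.span R (Set.range e), f x ∈ Submodule.span R (Set.range e)) (i : ι) :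
    f (e i) =
      ∑ l, toMatrix (Module.Basis.span hli) (Module.Basis.span hli) (f.restrict hf) l i • e l := by
  set b := Module.Basis.span hli
  have hb : ∀ l, (b l : M) = e l := fun l => congrArg Subtype.val (Module.Basis.span_apply hli l)
  simp_rw [toMatrix_apply, ← hb]
  rw [← coe_restrict_apply hf]
  conv_lhs => rw [← b.sum_repr (f.restrict hf (b i))]
  simp only [Submodule.coe_sum, Submodule.coe_smul]

theorem stmt14_general {X : Type*} [MeasurableSpace X] (μ : Measure X)
    (A : Lp ℝ 2 μ →L[ℝ] Lp ℝ 2 μ)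
    (hpos : ∀ f : Lp ℝ 2 μ, 0 ≤ f → 0 ≤ A f)
    (r : ℕ) (hr : 2 ≤ r) (hpot : A ^ r = A)
    (N : ℕ) (e : Fin N → Lp ℝ 2 μ)
    (he0 : ∀ i, 0 ≤ e i) (hne : ∀ i, e i ≠ 0)
    (hdisj : ∀ i j, i ≠ j →
      μ (Function.support (e i : X → ℝ) ∩ Function.support (e j : X → ℝ)) = 0)
    (hli : LinearIndependent ℝ e)
    (hspan : Submodule.span ℝ (Set.range e) =
      LinearMap.range (A : Lp ℝ 2 μ →ₗ[ℝ] Lp ℝ 2 μ)) :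
    ∀ i, ∃ j : Fin N, ∃ α : ℝ, 0 < α ∧ A (e i) = α • e j ∧
      ∀ (j' : Fin N) (α' : ℝ), 0 < α' → A (e i) = α' • e j' → j' = j ∧ α' = α := by
  have hA : ∀ x ∈ Submodule.span ℝ (Set.range e), A x ∈ Submodule.span ℝ (Set.range e) :=
    fun x _ => hspan ▸ LinearMap.mem_range_self _ x
  set b := Module.Basis.span hli
  set M : Matrix (Fin N) (Fin N) ℝ :=
    LinearMap.toMatrix b b ((A : Lp ℝ 2 μ →ₗ[ℝ] Lp ℝ 2 μ).restrict hA)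
  have hAe : ∀ i, A (e i) = ∑ l, M l i • e l :=
    LinearMap.apply_eq_sum_toMatrix_restrict_span hli _ hA
  have hM : ∀ k l, 0 ≤ M k l := fun k l => Lp.coeff_nonneg_of_sum_smul_nonneg (he0 k) (hne k)
    (fun m hm => hdisj k m hm.symm) (hAe l ▸ hpos _ (he0 l) : 0 ≤ ∑ m, M m l • e m)
  have hM1 : M ^ (r - 1) = 1 := by
    rw [LinearMap.toMatrix_pow, Module.End.pow_restrict, ← LinearMap.toMatrix_one b]
    congr 1
    exact LinearMap.ext fun v => Subtype.ext <| Module.End.pow_pred_apply_of_pow_eq_self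
      (by rw [← ContinuousLinearMap.toLinearMap_pow, hpot]) (hspan.le v.2)
  have hpred : r - 1 = r - 2 + 1 := by omega
  intro i
  obtain ⟨j, hj, hzero⟩ := Matrix.exists_pos_forall_ne_eq_zero_of_nonneg_inverse hM
    (Matrix.pow_apply_nonneg hM _) (by rw [← pow_succ', ← hpred, hM1])
    (by rw [← pow_succ, ← hpred, hM1]) i
  have hAei : A (e i) = M j i • e j := by
    rw [hAe, Finset.sum_eq_single j (fun k _ hk => by rw [hzero k hk, zero_smul]) (by simp)]
  refine ⟨j, M j i, hj, hAei, fun j' α' hα' h => ?_⟩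
  obtain rfl : j' = j := hli.eq_of_smul_apply_eq_smul_apply α' _ j' j hα'.ne' (h ▸ hAei)
  exact ⟨rfl, smul_left_injective ℝ (hne j') (h.symm.trans hAei)⟩

theorem stmt14 {X : Type*} [MeasurableSpace X] (μ : Measure X) [IsFiniteMeasure μ]
    (A : Lp ℝ 2 μ →L[ℝ] Lp ℝ 2 μ)
    (hpos : ∀ f : Lp ℝ 2 μ, 0 ≤ f → 0 ≤ A f)
    (r : ℕ) (hr : 2 ≤ r) (hpot : A ^ r = A)
    (N : ℕ) (e : Fin N → Lp ℝ 2 μ)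
    (hmem : ∀ i, e i ∈ Set.range A)
    (he0 : ∀ i, 0 ≤ e i) (hne : ∀ i, e i ≠ 0)
    (hdisj : ∀ i j, i ≠ j →
      μ (Function.support (e i : X → ℝ) ∩ Function.support (e j : X → ℝ)) = 0)
    (hli : LinearIndependent ℝ e)
    (hspan : Submodule.span ℝ (Set.range e) =
      LinearMap.range (A : Lp ℝ 2 μ →ₗ[ℝ] Lp ℝ 2 μ)) :
    ∀ i, ∃ j : Fin N, ∃ α : ℝ, 0 < α ∧ A (e i) = α • e j ∧
      ∀ (j' : Fin N) (α' : ℝ), 0 < α' → A (e i) = α' • e j' → j' = j ∧ α' = α :=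
  stmt14_general μ A hpos r hr hpot N e he0 hne hdisj hli hspan
end

section
/- Let A be a nonnegative bounded linear operator on L²(X) with A³ = A and suppose R(A) has a basis {e₁, e₂} of nonnegative functions with essentially disjoint supports such that A e₁ = α e₁ for some α > 0. Then α = 1, A e₂ = e₂, and A acts as the identity on R(A) (so A is idempotent on its range). -/
open MeasureTheory

theorem stmt15 {X : Type*} [MeasurableSpace X] (μ : Measure X) [IsFiniteMeasure μ]
    (A : Lp ℝ 2 μ →L[ℝ] Lp ℝ 2 μ)
    (hpos : ∀ f : Lp ℝ 2 μ, 0 ≤ f → 0 ≤ A f)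
    (hpot : A ^ 3 = A)
    (e₁ e₂ : Lp ℝ 2 μ)
    (he₁0 : 0 ≤ e₁) (he₂0 : 0 ≤ e₂) (he₁ : e₁ ≠ 0) (he₂ : e₂ ≠ 0)
    (hdisj : μ (Function.support (e₁ : X → ℝ) ∩ Function.support (e₂ : X → ℝ)) = 0)
    (hmem₁ : e₁ ∈ Set.range A) (hmem₂ : e₂ ∈ Set.range A)
    (hli : LinearIndependent ℝ ![e₁, e₂])
    (hspan : Submodule.span ℝ {e₁, e₂} =
      LinearMap.range (A : Lp ℝ 2 μ →ₗ[ℝ] Lp ℝ 2 μ))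
    (α : ℝ) (hα : 0 < α) (hAe₁ : A e₁ = α • e₁) :
    α = 1 ∧ A e₂ = e₂ ∧ ∀ x ∈ Set.range A, A x = x := by
  have hpair := LinearIndependent.pair_iff.mp hli
  -- A ∘ A is the identity on the range of A
  have hAA : ∀ x ∈ Set.range A, A (A x) = x := by
    rintro x ⟨y, rfl⟩
    have h3 : (A ^ 3) y = A (A (A y)) := by
      simp [pow_succ, ContinuousLinearMap.mul_apply]
    rw [hpot] at h3
    exact h3.symm
  -- α = 1
  have hAAe₁ : A (A e₁) = e₁ := hAA e₁ hmem₁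
  rw [hAe₁, _root_.map_smul, hAe₁, smul_smul] at hAAe₁
  have hα2 : α * α = 1 := by
    have h0 : (α * α - 1) • e₁ = 0 := by
      rw [sub_smul, one_smul, hAAe₁, sub_self]
    rcases smul_eq_zero.mp h0 with h' | h'
    · linarith [h']
    · exact absurd h' he₁
  have hα1 : α = 1 := by nlinarith
  subst hα1
  rw [one_smul] at hAe₁
  -- A e₂ = a • e₁ + b • e₂
  have hmemspan : A e₂ ∈ Submodule.span ℝ {e₁, e₂} := by
    rw [hspan]
    exact ⟨e₂, rfl⟩
  obtain ⟨a, b, hab⟩ := Submodule.mem_span_pair.mp hmemspan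
  have hAAe₂ : A (A e₂) = e₂ := hAA e₂ hmem₂
  rw [← hab, map_add, _root_.map_smul, _root_.map_smul, hAe₁, ← hab] at hAAe₂
  have heq : (a + b * a) • e₁ + (b * b - 1) • e₂ = 0 := by
    rw [add_smul, sub_smul, one_smul, mul_smul, mul_smul]
    have : a • e₁ + b • (a • e₁ + b • e₂) = e₂ := hAAe₂
    rw [smul_add] at this
    abel_nf
    abel_nf at this
    linear_combination (norm := abel) this - e₂
  obtain ⟨h1, h2⟩ := hpair _ _ heq
  have hb : b = 1 ∨ b = -1 := by
    have : (b - 1) * (b + 1) = 0 := by ring_nf; linarith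
    rcases mul_eq_zero.mp this with h | h
    · left; linarith
    · right; linarith
  rcases hb with hb | hb
  · -- b = 1 forces a = 0
    subst hb
    have ha : a = 0 := by linarith
    subst ha
    rw [zero_smul, zero_add, one_smul] at hab
    have hab2 : A e₂ = e₂ := hab.symm
    refine ⟨rfl, hab2, ?_⟩
    rintro x ⟨y, rfl⟩
    have hx : A y ∈ Submodule.span ℝ {e₁, e₂} := by
      rw [hspan]; exact ⟨y, rfl⟩
    obtain ⟨m, n, hmn⟩ := Submodule.mem_span_pair.mp hx
    rw [← hmn, map_add, _root_.map_smul, _root_.map_smul, hAe₁, hab2]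
  · -- b = -1 leads to contradiction via positivity
    exfalso
    subst hb
    rw [neg_one_smul] at hab
    have hApos : 0 ≤ A e₂ := hpos e₂ he₂0
    rw [← hab] at hApos
    have h1ae := (Lp.coeFn_nonneg (a • e₁ + -e₂ : Lp ℝ 2 μ)).mpr hApos
    have hsum : ((a • e₁ + -e₂ : Lp ℝ 2 μ) : X → ℝ) =ᵐ[μ]
        fun x => a * (e₁ : X → ℝ) x - (e₂ : X → ℝ) x := by
      filter_upwards [Lp.coeFn_add (a • e₁) (-e₂ : Lp ℝ 2 μ), Lp.coeFn_smul a e₁,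
        Lp.coeFn_neg (e₂ : Lp ℝ 2 μ)] with x hx hx1 hx2
      simp only [Pi.add_apply, Pi.neg_apply, Pi.smul_apply, smul_eq_mul] at hx1 hx2
      rw [hx, Pi.add_apply, hx1, hx2]
      ring
    have hd : ∀ᵐ x ∂μ,
        x ∉ Function.support (e₁ : X → ℝ) ∩ Function.support (e₂ : X → ℝ) :=
      measure_eq_zero_iff_ae_notMem.mp hdisj
    have he₂ae := (Lp.coeFn_nonneg e₂).mpr he₂0
    have hzero : (e₂ : X → ℝ) =ᵐ[μ] 0 := by
      filter_upwards [h1ae, hsum, hd, he₂ae] with x hx hx1 hx2 hx3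
      simp only [Pi.zero_apply] at hx hx3 ⊢
      rw [hx1] at hx
      by_contra hne
      have hx2' : (e₁ : X → ℝ) x = 0 := by
        by_contra hne1
        exact hx2 ⟨hne1, hne⟩
      rw [hx2', mul_zero, zero_sub] at hx
      have : (e₂ : X → ℝ) x > 0 := lt_of_le_of_ne hx3 (Ne.symm hne)
      linarith
    exact he₂ ((Lp.eq_zero_iff_ae_eq_zero).mpr hzero)
end

section
/- Let A be a nonnegative compact linear operator on L²(X) with A^r = A (r ≥ 2), whose kernel contains no nonzero nonnegative function, and suppose R(A) has a basis e₁, …, e_N of nonnegative functions with pairwise essentially disjoint supports, where N > r − 1. Then A is decomposable: there exists a Borel set U ⊆ X with μ(U)·μ(Uᶜ) > 0 such that ⟨A χ_U, χ_{Uᶜ}⟩ = 0. -/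
/-!
On the range of `A` the identity `A ^ r = A` makes `A ^ (r - 1)` the identity, so the matrix `M`
of `A` in the basis `e` satisfies `M ^ (r - 1) = 1`. The supports of the `e i` are disjoint, so
`e` is orthogonal and positivity of `A` makes `M` entrywise nonnegative. A nonnegative matrix with
a nonnegative inverse has one nonzero entry per column, so the indices reachable from a fixed one
through `M` form a set `O` of at most `r - 1 < N` indices that `M` maps into itself. Let `U` be the
union of the supports of the `e k`, `k ∈ O`. Each `A e_k` with `k ∈ O` vanishes off `U`; as the
adjoint of `A` is positive, `A† χ_{Uᶜ}` is a nonnegative function orthogonal to every such `e_k`,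
hence zero on `U`, and `⟪A χ_U, χ_{Uᶜ}⟫ = ⟪χ_U, A† χ_{Uᶜ}⟫ = 0`.
-/

open MeasureTheory

namespace Matrix

variable {ι R : Type*} [Fintype ι] [DecidableEq ι] [CommRing R] [LinearOrder R]
  [IsStrictOrderedRing R]

lemma subsingleton_col_support_of_nonneg_of_mul_eq_one {M B : Matrix ι ι R}
    (hM : ∀ i j, 0 ≤ M i j) (hB : ∀ i j, 0 ≤ B i j) (hBM : B * M = 1) (j : ι) :
    {i | M i j ≠ 0}.Subsingleton := by
  intro a ha b hb
  by_contra hab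
  -- `B * M = 1` forces column `b` of `B` to live in row `j`, then `M * B = 1` kills `M a j`.
  have hcol : ∀ x, (M * B) x b = M x j * B j b := by
    intro x
    rw [mul_apply, Finset.sum_eq_single j _ (by simp)]
    intro l _ hlj
    have hzero : (B * M) l j = 0 := by rw [hBM, one_apply_ne hlj]
    rw [mul_apply, Finset.sum_eq_zero_iff_of_nonneg fun k _ => mul_nonneg (hB l k) (hM k j)]
      at hzero
    rw [(mul_eq_zero.1 (hzero b (Finset.mem_univ _))).resolve_right hb, mul_zero]
  have hMB : M * B = 1 := mul_eq_one_comm.1 hBM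
  have hbb := hcol b
  have hab' := hcol a
  rw [hMB, one_apply_eq] at hbb
  rw [hMB, one_apply_ne hab] at hab'
  exact ha ((mul_eq_zero.1 hab'.symm).resolve_right (right_ne_zero_of_mul_eq_one hbb.symm))

lemma exists_invariant_finset_of_nonneg_of_pow_eq_one {M : Matrix ι ι R}
    (hM : ∀ i j, 0 ≤ M i j) {m : ℕ} (hm : 0 < m) (hpow : M ^ m = 1) (i₀ : ι) :
    ∃ O : Finset ι, i₀ ∈ O ∧ O.card ≤ m ∧ ∀ k ∈ O, ∀ i, M i k ≠ 0 → i ∈ O := by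
  -- `O` collects the indices reachable from `i₀` in fewer than `m` steps; each `M ^ q` has the
  -- nonnegative inverse `M ^ ((m - 1) * q)`, so contributes at most one of them.
  refine ⟨(Finset.range m).biUnion fun q => {i | (M ^ q) i i₀ ≠ 0}, ?_, ?_, ?_⟩
  · exact Finset.mem_biUnion.2 ⟨0, Finset.mem_range.2 hm, by simp⟩
  · have hinv : ∀ q, M ^ ((m - 1) * q) * M ^ q = 1 := fun q => by
      rw [← pow_add, ← Nat.succ_mul, Nat.succ_eq_add_one, Nat.sub_add_cancel hm, pow_mul, hpow,
        one_pow]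
    have hcard : ∀ q ∈ Finset.range m, ({i | (M ^ q) i i₀ ≠ 0} : Finset ι).card ≤ 1 :=
      fun q _ => Finset.card_le_one.2 fun a ha b hb =>
        subsingleton_col_support_of_nonneg_of_mul_eq_one (pow_apply_nonneg hM q)
          (pow_apply_nonneg hM _) (hinv q) i₀ (by simpa using ha) (by simpa using hb)
    simpa using Finset.card_biUnion_le_card_mul _ _ 1 hcard
  · intro k hk i hik
    obtain ⟨q, hq, hkq⟩ := Finset.mem_biUnion.1 hk
    rw [Finset.mem_range] at hq
    rw [Finset.mem_filter] at hkq
    have hpos : 0 < (M ^ (q + 1)) i i₀ := by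
      rw [pow_succ', mul_apply]
      refine lt_of_lt_of_le ?_ (Finset.single_le_sum (fun l _ =>
        mul_nonneg (hM i l) (pow_apply_nonneg hM q l i₀)) (Finset.mem_univ k))
      exact mul_pos ((hM i k).lt_of_ne' hik) ((pow_apply_nonneg hM q k i₀).lt_of_ne' hkq.2)
    rcases (show q + 1 ≤ m from hq).lt_or_eq with hlt | heq
    · exact Finset.mem_biUnion.2 ⟨q + 1, Finset.mem_range.2 hlt, by simpa using hpos.ne'⟩
    · rw [heq, hpow] at hpos
      have : i = i₀ := by by_contra h; simp [one_apply_ne h] at hpos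
      subst this
      exact Finset.mem_biUnion.2 ⟨0, Finset.mem_range.2 hm, by simp⟩

end Matrix

namespace Module.End

variable {R V ι : Type*} [CommSemiring R] [AddCommMonoid V] [Module R V] [Fintype ι]
  [DecidableEq ι] {T : Module.End R V} {e : ι → V} {M : Matrix ι ι R}

lemma pow_apply_eq_sum_of_apply_eq_sum (hT : ∀ j, T (e j) = ∑ i, M i j • e i) (q : ℕ) (j : ι) :
    (T ^ q) (e j) = ∑ i, (M ^ q) i j • e i := by
  induction q generalizing j with
  | zero => simp [Matrix.one_apply]
  | succ q ih =>
    simp only [pow_succ, Module.End.mul_apply, hT, map_sum, map_smul, ih, Finset.smul_sum,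
      smul_smul, Matrix.mul_apply, Finset.sum_smul]
    rw [Finset.sum_comm]
    simp only [mul_comm]

lemma matrix_pow_eq_one_of_pow_succ_eq_self (hT : ∀ j, T (e j) = ∑ i, M i j • e i)
    (he : LinearIndependent R e) (hrange : ∀ j, e j ∈ Set.range T) {m : ℕ}
    (hpow : T ^ (m + 1) = T) : M ^ m = 1 := by
  have hcol : ∀ j, ∑ i, (M ^ m) i j • e i = ∑ i, (1 : Matrix ι ι R) i j • e i := by
    intro j
    obtain ⟨y, hy⟩ := hrange j
    rw [← pow_apply_eq_sum_of_apply_eq_sum hT, ← hy, ← Module.End.mul_apply, ← pow_succ, hpow]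
    simp [Matrix.one_apply, hy]
  ext i j
  exact Fintype.linearIndependent_iffₛ.1 he _ _ (hcol j) i

end Module.End

namespace MeasureTheory

open Function

variable {X : Type*} [MeasurableSpace X] {μ : Measure X}

lemma measure_compl_pos_of_measure_inter_eq_zero {s t : Set X} (hs : 0 < μ s)
    (hst : μ (s ∩ t) = 0) : 0 < μ tᶜ :=
  calc 0 < μ s := hs
    _ = μ (s \ t) := (measure_sdiff_null' hst).symm
    _ ≤ μ tᶜ := measure_mono fun _ hx => hx.2

lemma Lp.measurableSet_support {E : Type*} [NormedAddCommGroup E] {p : ENNReal} (f : Lp E p μ) :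
    MeasurableSet (support f) :=
  (Lp.stronglyMeasurable f).measurableSet_support

lemma Lp.measure_support_pos {E : Type*} [NormedAddCommGroup E] {p : ENNReal} {f : Lp E p μ}
    (hf : f ≠ 0) : 0 < μ (support f) := by
  rw [pos_iff_ne_zero]
  intro h
  exact hf (Lp.eq_zero_iff_ae_eq_zero.2 (ae_iff.2 h))

lemma Lp.indicatorConstLp_one_nonneg {s : Set X} (hs : MeasurableSet s) (hμs : μ s ≠ ⊤) :
    0 ≤ indicatorConstLp 2 hs hμs (1 : ℝ) := by
  rw [← Lp.coeFn_nonneg]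
  filter_upwards [indicatorConstLp_coeFn (p := 2) (hs := hs) (hμs := hμs) (c := (1 : ℝ))]
    with x hx
  rw [hx]
  exact Set.indicator_nonneg (fun _ _ => zero_le_one) x

namespace L2

lemma inner_nonneg {f g : Lp ℝ 2 μ} (hf : 0 ≤ f) (hg : 0 ≤ g) : 0 ≤ inner ℝ f g := by
  rw [L2.inner_def]
  refine integral_nonneg_of_ae ?_
  filter_upwards [(Lp.coeFn_nonneg f).2 hf, (Lp.coeFn_nonneg g).2 hg] with x hfx hgx
  simpa using mul_nonneg hgx hfx

lemma inner_eq_zero_of_measure_support_inter_eq_zero {f g : Lp ℝ 2 μ}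
    (h : μ (support f ∩ support g) = 0) : inner ℝ f g = 0 := by
  rw [L2.inner_def]
  refine integral_eq_zero_of_ae ?_
  filter_upwards [measure_eq_zero_iff_ae_notMem.1 h] with x hx
  by_cases hfx : f x = 0
  · simp [hfx]
  · simp [show g x = 0 from not_not.1 fun hgx => hx ⟨hfx, hgx⟩]

lemma ae_eq_zero_of_inner_eq_zero {f g : Lp ℝ 2 μ} (hf : 0 ≤ f) (hg : 0 ≤ g)
    (h : inner ℝ f g = 0) : ∀ᵐ x ∂μ, f x ≠ 0 → g x = 0 := by
  have hfg : 0 ≤ᵐ[μ] fun x => inner ℝ (f x) (g x) := by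
    filter_upwards [(Lp.coeFn_nonneg f).2 hf, (Lp.coeFn_nonneg g).2 hg] with x hfx hgx
    simpa using mul_nonneg hgx hfx
  rw [L2.inner_def, integral_eq_zero_iff_of_nonneg_ae hfg (L2.integrable_inner f g)] at h
  filter_upwards [h] with x hx hfx
  simpa [hfx] using hx

lemma inner_indicatorConstLp_one_eq_zero {f : Lp ℝ 2 μ} {s : Set X} (hs : MeasurableSet s)
    (hμs : μ s ≠ ⊤) (hfs : Disjoint (support f) s) :
    inner ℝ f (indicatorConstLp 2 hs hμs (1 : ℝ)) = 0 := by
  rw [real_inner_comm, L2.inner_indicatorConstLp_one]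
  exact setIntegral_eq_zero_of_forall_eq_zero fun x hx =>
    notMem_support.1 (hfs.notMem_of_mem_right hx)

lemma inner_sum_smul_indicatorConstLp_one_eq_zero {ι : Type*} [Fintype ι] {e : ι → Lp ℝ 2 μ}
    {c : ι → ℝ} {s : Set X} (hs : MeasurableSet s) (hμs : μ s ≠ ⊤)
    (hes : ∀ i, c i ≠ 0 → Disjoint (support (e i)) s) :
    inner ℝ (∑ i, c i • e i) (indicatorConstLp 2 hs hμs (1 : ℝ)) = 0 := by
  rw [sum_inner]
  refine Finset.sum_eq_zero fun i _ => ?_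
  by_cases hi : c i = 0
  · rw [hi, zero_smul, inner_zero_left]
  · rw [real_inner_smul_left, inner_indicatorConstLp_one_eq_zero hs hμs (hes i hi), mul_zero]

variable {A : Lp ℝ 2 μ →L[ℝ] Lp ℝ 2 μ}

lemma adjoint_apply_nonneg (hA : ∀ f, 0 ≤ f → 0 ≤ A f) {g : Lp ℝ 2 μ} (hg : 0 ≤ g) :
    0 ≤ A.adjoint g := by
  rw [← Lp.coeFn_nonneg]
  refine (Lp.finStronglyMeasurable _ two_ne_zero ENNReal.ofNat_ne_top).aefinStronglyMeasurable
    |>.ae_nonneg_of_forall_setIntegral_nonneg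
      (fun s _ hμs => integrableOn_Lp_of_measure_ne_top _ one_le_two hμs.ne) fun s hs hμs => ?_
  rw [← L2.inner_indicatorConstLp_one hs hμs.ne, ContinuousLinearMap.adjoint_inner_right]
  exact inner_nonneg (hA _ (Lp.indicatorConstLp_one_nonneg hs hμs.ne)) hg

lemma inner_apply_indicatorConstLp_eq_zero (hA : ∀ f, 0 ≤ f → 0 ≤ A f) {ι : Type*}
    (s : Finset ι) {f : ι → Lp ℝ 2 μ} (hf : ∀ k, 0 ≤ f k) {U V : Set X}
    (hU : MeasurableSet U) (hμU : μ U ≠ ⊤) (hV : MeasurableSet V) (hμV : μ V ≠ ⊤)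
    (hUf : U ⊆ ⋃ k ∈ s, support (f k))
    (hfV : ∀ k ∈ s, inner ℝ (A (f k)) (indicatorConstLp 2 hV hμV (1 : ℝ)) = 0) :
    inner ℝ (A (indicatorConstLp 2 hU hμU (1 : ℝ))) (indicatorConstLp 2 hV hμV (1 : ℝ)) = 0 := by
  set h := A.adjoint (indicatorConstLp 2 hV hμV (1 : ℝ))
  have hh : 0 ≤ h := adjoint_apply_nonneg hA (Lp.indicatorConstLp_one_nonneg hV hμV)
  have hvanish : ∀ k ∈ s, ∀ᵐ x ∂μ, f k x ≠ 0 → h x = 0 := fun k hk =>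
    ae_eq_zero_of_inner_eq_zero (hf k) hh <| by
      rw [ContinuousLinearMap.adjoint_inner_right, hfV k hk]
  rw [← ContinuousLinearMap.adjoint_inner_right, L2.inner_indicatorConstLp_one]
  refine setIntegral_eq_zero_of_ae_eq_zero ?_
  filter_upwards [(Filter.eventually_all_finset s).2 hvanish] with x hx hxU
  obtain ⟨k, hk, hxk⟩ := Set.mem_iUnion₂.1 (hUf hxU)
  exact hx k hk hxk

lemma coeff_nonneg_of_sum_smul_nonneg {ι : Type*} [Fintype ι] {e : ι → Lp ℝ 2 μ}
    (he0 : ∀ i, 0 ≤ e i) (hne : ∀ i, e i ≠ 0) (horth : Pairwise fun i j => inner ℝ (e i) (e j) = 0)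
    {c : ι → ℝ} (hc : 0 ≤ ∑ i, c i • e i) (k : ι) : 0 ≤ c k := by
  have hinner : inner ℝ (∑ i, c i • e i) (e k) = c k * ‖e k‖ ^ 2 := by
    rw [sum_inner, Finset.sum_eq_single k (fun i _ hik => by
      rw [real_inner_smul_left, horth hik, mul_zero]) (by simp),
      real_inner_smul_left, real_inner_self_eq_norm_sq]
  refine nonneg_of_mul_nonneg_left ?_ (pow_pos (norm_pos_iff.2 (hne k)) 2)
  exact hinner ▸ inner_nonneg hc (he0 k)

end L2

end MeasureTheory

theorem stmt16_general {X : Type*} [MeasurableSpace X] (μ : Measure X) [IsFiniteMeasure μ]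
    (A : Lp ℝ 2 μ →L[ℝ] Lp ℝ 2 μ)
    (hpos : ∀ f : Lp ℝ 2 μ, 0 ≤ f → 0 ≤ A f)
    (r : ℕ) (hr : 2 ≤ r) (hpot : A ^ r = A)
    (N : ℕ) (e : Fin N → Lp ℝ 2 μ)
    (hmem : ∀ i, e i ∈ Set.range A)
    (he0 : ∀ i, 0 ≤ e i) (hne : ∀ i, e i ≠ 0)
    (hdisj : ∀ i j, i ≠ j →
      μ (Function.support (e i : X → ℝ) ∩ Function.support (e j : X → ℝ)) = 0)
    (hli : LinearIndependent ℝ e)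
    (hspan : Submodule.span ℝ (Set.range e) =
      LinearMap.range (A : Lp ℝ 2 μ →ₗ[ℝ] Lp ℝ 2 μ))
    (hN : r - 1 < N) :
    ∃ U : Set X, ∃ hU : MeasurableSet U, 0 < μ U ∧ 0 < μ Uᶜ ∧
      (inner ℝ (A (indicatorConstLp 2 hU (measure_ne_top μ U) (1 : ℝ)))
        (indicatorConstLp 2 hU.compl (measure_ne_top μ Uᶜ) (1 : ℝ)) : ℝ) = 0 := by
  obtain ⟨M, hAM⟩ : ∃ M : Matrix (Fin N) (Fin N) ℝ, ∀ j, A (e j) = ∑ i, M i j • e i := by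
    have hAe (j) : A (e j) ∈ Submodule.span ℝ (Set.range e) := hspan ▸ LinearMap.mem_range_self _ _
    choose c hc using fun j => (Submodule.mem_span_range_iff_exists_fun ℝ).1 (hAe j)
    exact ⟨Matrix.of fun i j => c j i, fun j => (hc j).symm⟩
  have hM : ∀ i j, 0 ≤ M i j := fun i j =>
    L2.coeff_nonneg_of_sum_smul_nonneg he0 hne
      (fun i j hij => L2.inner_eq_zero_of_measure_support_inter_eq_zero (hdisj i j hij))
      (hAM j ▸ hpos _ (he0 j)) i
  have hMpow : M ^ (r - 1) = 1 :=
    Module.End.matrix_pow_eq_one_of_pow_succ_eq_self (T := (A : Lp ℝ 2 μ →ₗ[ℝ] Lp ℝ 2 μ)) hAM hli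
      hmem (by rw [Nat.sub_add_cancel (by omega), ← ContinuousLinearMap.toLinearMap_pow, hpot])
  obtain ⟨O, hi₀, hcard, hO⟩ := Matrix.exists_invariant_finset_of_nonneg_of_pow_eq_one hM
    (by omega) hMpow ⟨0, by omega⟩
  obtain ⟨j₀, -, hj₀⟩ := Finset.exists_mem_notMem_of_card_lt_card (s := O) (t := .univ)
    (by simp only [Finset.card_univ, Fintype.card_fin]; omega)
  set U := ⋃ k ∈ O, Function.support (e k)
  have hsub : ∀ k ∈ O, Function.support (e k) ⊆ U := fun k hk =>
    Set.subset_iUnion₂ (s := fun k (_ : k ∈ O) => Function.support (e k)) k hk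
  have hU : MeasurableSet U := .biUnion O.countable_toSet fun k _ => Lp.measurableSet_support _
  refine ⟨U, hU, (Lp.measure_support_pos (hne _)).trans_le (measure_mono (hsub _ hi₀)), ?_, ?_⟩
  · refine measure_compl_pos_of_measure_inter_eq_zero (Lp.measure_support_pos (hne j₀)) ?_
    rw [Set.inter_iUnion₂]
    exact (measure_biUnion_null_iff O.countable_toSet).2 fun k hk =>
      hdisj j₀ k (ne_of_mem_of_not_mem hk hj₀).symm
  · refine L2.inner_apply_indicatorConstLp_eq_zero hpos O he0 hU _ hU.compl _ subset_rfl
      fun k hk => ?_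
    rw [hAM]
    exact L2.inner_sum_smul_indicatorConstLp_one_eq_zero _ _ fun i hik =>
      disjoint_compl_right.mono_left (hsub i (hO k hk i hik))

theorem stmt16 {X : Type*} [MeasurableSpace X] (μ : Measure X) [IsFiniteMeasure μ]
    (A : Lp ℝ 2 μ →L[ℝ] Lp ℝ 2 μ) (hcompact : IsCompactOperator A)
    (hpos : ∀ f : Lp ℝ 2 μ, 0 ≤ f → 0 ≤ A f)
    (r : ℕ) (hr : 2 ≤ r) (hpot : A ^ r = A)
    (hker : ∀ h : Lp ℝ 2 μ, A h = 0 → 0 ≤ h → h = 0)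
    (N : ℕ) (e : Fin N → Lp ℝ 2 μ)
    (hmem : ∀ i, e i ∈ Set.range A)
    (he0 : ∀ i, 0 ≤ e i) (hne : ∀ i, e i ≠ 0)
    (hdisj : ∀ i j, i ≠ j →
      μ (Function.support (e i : X → ℝ) ∩ Function.support (e j : X → ℝ)) = 0)
    (hli : LinearIndependent ℝ e)
    (hspan : Submodule.span ℝ (Set.range e) =
      LinearMap.range (A : Lp ℝ 2 μ →ₗ[ℝ] Lp ℝ 2 μ))
    (hN : r - 1 < N) :
    ∃ U : Set X, ∃ hU : MeasurableSet U, 0 < μ U ∧ 0 < μ Uᶜ ∧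
      (inner ℝ (A (indicatorConstLp 2 hU (measure_ne_top μ U) (1 : ℝ)))
        (indicatorConstLp 2 hU.compl (measure_ne_top μ Uᶜ) (1 : ℝ)) : ℝ) = 0 :=
  stmt16_general μ A hpos r hr hpot N e hmem he0 hne hdisj hli hspan hN
end

section
/- Let A be a nonnegative bounded linear operator on L²(X) with A^r = A (r ≥ 2) and let e₁, …, e_N be a nonnegative pairwise-support-disjoint basis of R(A). Then the permutation-like action of A on basis directions is eventually periodic with period dividing r − 1; in particular, for each i, A^{r-1} eᵢ = eᵢ and the orbit of eᵢ under A (up to positive scalars) is a cycle of length dividing r − 1. -/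
open MeasureTheory

theorem stmt17 {X : Type*} [MeasurableSpace X] (μ : Measure X) [IsFiniteMeasure μ]
    (A : Lp ℝ 2 μ →L[ℝ] Lp ℝ 2 μ)
    (hpos : ∀ f : Lp ℝ 2 μ, 0 ≤ f → 0 ≤ A f)
    (r : ℕ) (hr : 2 ≤ r) (hpot : A ^ r = A)
    (N : ℕ) (e : Fin N → Lp ℝ 2 μ)
    (hmem : ∀ i, e i ∈ Set.range A)
    (he0 : ∀ i, 0 ≤ e i) (hne : ∀ i, e i ≠ 0)
    (hdisj : ∀ i j, i ≠ j →
      μ (Function.support (e i : X → ℝ) ∩ Function.support (e j : X → ℝ)) = 0)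
    (hli : LinearIndependent ℝ e)
    (hspan : Submodule.span ℝ (Set.range e) =
      LinearMap.range (A : Lp ℝ 2 μ →ₗ[ℝ] Lp ℝ 2 μ))
    (σ : Fin N → Fin N) (α : Fin N → ℝ) (hα : ∀ i, 0 < α i)
    (hσ : ∀ i, A (e i) = α i • e (σ i)) :
    Function.Bijective σ ∧ (∀ i, σ^[r - 1] i = i) ∧
      ∀ i, (A ^ (r - 1)) (e i) = e i := by
  -- powers of A on basis vectors
  have hpow : ∀ (k : ℕ) (i : Fin N),
      (A ^ k) (e i) = (∏ j ∈ Finset.range k, α (σ^[j] i)) • e (σ^[k] i) := by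
    intro k i
    induction k with
    | zero => simp
    | succ k ih =>
      have h1 : (A ^ (k + 1)) (e i) = A ((A ^ k) (e i)) := by
        rw [pow_succ']
        rfl
      rw [h1, ih, _root_.map_smul, hσ, Finset.prod_range_succ, Function.iterate_succ_apply',
        smul_smul, mul_comm]
  -- A^{r-1} fixes each e i
  have hfix : ∀ i, (A ^ (r - 1)) (e i) = e i := by
    intro i
    obtain ⟨f, hf⟩ := hmem i
    have hr1 : r - 1 + 1 = r := by omega
    have h2 : (A ^ (r - 1)) (A f) = (A ^ r) f := by
      rw [← hr1, pow_succ]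
      rfl
    rw [← hf, h2, hpot]
  -- the key scalar identity
  have hkey : ∀ i, e i = (∏ j ∈ Finset.range (r - 1), α (σ^[j] i)) • e (σ^[r-1] i) := by
    intro i
    rw [← hpow, hfix]
  -- derive fixed points of σ^[r-1]
  have hsfix : ∀ i, σ^[r - 1] i = i := by
    intro i
    set c := ∏ j ∈ Finset.range (r - 1), α (σ^[j] i) with hcdef
    set t := σ^[r - 1] i with htdef
    have hg : ∑ j, ((if i = j then (1:ℝ) else 0) - (if t = j then c else 0)) • e j = 0 := by
      simp only [sub_smul, Finset.sum_sub_distrib, ite_smul, one_smul, zero_smul,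
        Finset.sum_ite_eq, Finset.mem_univ, if_true]
      rw [sub_eq_zero]
      exact hkey i
    have hz := Fintype.linearIndependent_iff.mp hli _ hg
    by_contra hne'
    have := hz i
    simp [hne'] at this
  refine ⟨?_, hsfix, hfix⟩
  have hinj : Function.Injective σ := by
    intro a b hab
    have hr2 : r - 1 = (r - 2) + 1 := by omega
    have ha := hsfix a
    have hb := hsfix b
    rw [hr2, Function.iterate_succ_apply] at ha hb
    rw [← ha, ← hb, hab]
  exact Finite.injective_iff_bijective.mp hinj
end

section
/- If A is a nonnegative bounded linear operator on L²(X) whose kernel contains a nonzero nonnegative function h, then A vanishes on L²(Supp h); in particular, if moreover μ((Supp h)ᶜ) > 0, then A is decomposable. -/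
/-!
Positivity and `A h = 0` force `A g = 0` whenever `-n h ≤ g ≤ n h`. A function `f` vanishing
off `Supp h` is the `L²`-limit of its truncations to `[-n h, n h]` (dominated convergence: they
equal `f` pointwise for large `n`), so `A f = 0` by continuity. Decomposability follows with
`U = Supp h`, since then `A χ_U = 0`.
-/

open MeasureTheory Filter Topology

section Truncate

variable {E : Type*} [Lattice E] [AddCommGroup E]

def truncate (k f : E) : E := f ⊓ k ⊔ -k

theorem neg_le_truncate (k f : E) : -k ≤ truncate k f := le_sup_right

theorem truncate_le [IsOrderedAddMonoid E] {k : E} (hk : 0 ≤ k) (f : E) : truncate k f ≤ k :=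
  sup_le inf_le_right (neg_le_self hk)

end Truncate

theorem Real.truncate_eq_self {k a : ℝ} (h : |a| ≤ k) : truncate k a = a := by
  show max (min a k) (-k) = _
  rw [abs_le] at h
  rw [min_eq_left h.2, max_eq_left h.1]

theorem Real.abs_truncate_le {k : ℝ} (hk : 0 ≤ k) (a : ℝ) : |truncate k a| ≤ |a| := by
  show |max (min a k) (-k)| ≤ _
  rw [abs_le]
  constructor <;> cases abs_cases a <;> cases min_cases a k <;> cases max_cases (min a k) (-k) <;>
    linarith

theorem map_eq_zero_of_neg_le_of_le {𝓕 E F : Type*} [AddCommGroup E] [PartialOrder E]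
    [IsOrderedAddMonoid E] [AddCommGroup F] [PartialOrder F] [IsOrderedAddMonoid F]
    [FunLike 𝓕 E F] [AddMonoidHomClass 𝓕 E F] {A : 𝓕} (hA : ∀ f, 0 ≤ f → 0 ≤ A f)
    {g k : E} (hk : A k = 0) (hlo : -k ≤ g) (hhi : g ≤ k) : A g = 0 := by
  have hup : 0 ≤ A (k - g) := hA _ (sub_nonneg.mpr hhi)
  have hdown : 0 ≤ A (g + k) := hA _ (neg_le_iff_add_nonneg.mp hlo)
  rw [map_sub, hk, zero_sub, neg_nonneg] at hup
  rw [map_add, hk, add_zero] at hdown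
  exact le_antisymm hup hdown

namespace MeasureTheory

variable {α E : Type*} {m : MeasurableSpace α} {μ : Measure α} {p : ENNReal}

theorem unifIntegrable_of_dominated [NormedAddCommGroup E] {f : ℕ → α → E} {F : α → E}
    (hp : 1 ≤ p) (hp' : p ≠ ⊤) (hF : MemLp F p μ) (hfF : ∀ n, ∀ᵐ x ∂μ, ‖f n x‖ ≤ ‖F x‖) :
    UnifIntegrable f p μ := by
  intro ε hε
  obtain ⟨δ, hδ, hFδ⟩ := hF.eLpNorm_indicator_le hp hp' hε
  refine ⟨δ, hδ, fun n s hs hμs => le_trans (eLpNorm_mono_ae ?_) (hFδ s hs hμs)⟩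
  filter_upwards [hfF n] with x hx
  by_cases hxs : x ∈ s <;> simp [hxs, hx]

theorem Lp.tendsto_of_tendsto_ae_of_dominated [NormedAddCommGroup E] [IsFiniteMeasure μ]
    [Fact (1 ≤ p)] (hp : p ≠ ⊤) {f : ℕ → Lp E p μ} {g : Lp E p μ}
    (hfg : ∀ n, ∀ᵐ x ∂μ, ‖f n x‖ ≤ ‖g x‖)
    (hlim : ∀ᵐ x ∂μ, Tendsto (fun n => f n x) atTop (𝓝 (g x))) :
    Tendsto f atTop (𝓝 g) := by
  rw [Lp.tendsto_Lp_iff_tendsto_eLpNorm']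
  exact tendsto_Lp_finite_of_tendsto_ae Fact.out hp (fun n => (Lp.aestronglyMeasurable (f n)))
    (Lp.memLp g) (unifIntegrable_of_dominated Fact.out hp (Lp.memLp g) hfg) hlim

theorem Lp.coeFn_truncate (k f : Lp ℝ p μ) :
    ⇑(truncate k f) =ᵐ[μ] fun x => truncate (k x) (f x) := by
  filter_upwards [Lp.coeFn_sup (f ⊓ k) (-k), Lp.coeFn_inf f k, Lp.coeFn_neg k]
    with x hsup hinf hneg
  rw [truncate, hsup, Pi.sup_apply, hinf, Pi.inf_apply, hneg, Pi.neg_apply, truncate]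

theorem Lp.tendsto_truncate_natCast_smul [IsFiniteMeasure μ] [Fact (1 ≤ p)] (hp : p ≠ ⊤)
    {f h : Lp ℝ p μ} (h0 : 0 ≤ h)
    (hf : ∀ᵐ x ∂μ, x ∉ Function.support (h : α → ℝ) → f x = 0) :
    Tendsto (fun n : ℕ => truncate ((n : ℝ) • h) f) atTop (𝓝 f) := by
  have hcoe : ∀ᵐ x ∂μ, ∀ n : ℕ,
      truncate ((n : ℝ) • h) f x = truncate ((n : ℝ) * h x) (f x) := by
    rw [ae_all_iff]
    intro n
    filter_upwards [Lp.coeFn_truncate ((n : ℝ) • h) f, Lp.coeFn_smul (n : ℝ) h] with x hx hsmul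
    rw [hx, hsmul, Pi.smul_apply, smul_eq_mul]
  have hnonneg : ∀ᵐ x ∂μ, 0 ≤ h x := (Lp.coeFn_nonneg h).mpr h0
  refine Lp.tendsto_of_tendsto_ae_of_dominated hp (fun n => ?_) ?_
  · filter_upwards [hcoe, hnonneg] with x hx hx0
    rw [hx n, Real.norm_eq_abs, Real.norm_eq_abs]
    exact Real.abs_truncate_le (by positivity) _
  · filter_upwards [hcoe, hnonneg, hf] with x hx hx0 hxf
    -- `f x` is either `0` or sits where `h x > 0`; either way `|f x| ≤ n * h x` for large `n`.
    have hev : ∀ᶠ n : ℕ in atTop, |f x| ≤ n * h x := by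
      by_cases hfx : f x = 0
      · exact Eventually.of_forall fun n => by rw [hfx, abs_zero]; positivity
      · have hpos : 0 < h x := hx0.lt_of_ne' fun h0x => hfx (hxf (by simpa using h0x))
        obtain ⟨N, hN⟩ := exists_nat_ge (|f x| / h x)
        filter_upwards [eventually_ge_atTop N] with n hn
        rw [← div_le_iff₀ hpos]
        exact hN.trans (by exact_mod_cast hn)
    refine tendsto_const_nhds.congr' ?_
    filter_upwards [hev] with n hn
    rw [hx n, Real.truncate_eq_self hn]

theorem Lp.map_eq_zero_of_ae_eq_zero_off_support {F : Type*} [NormedAddCommGroup F]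
    [NormedSpace ℝ F] [PartialOrder F] [IsOrderedAddMonoid F] [IsFiniteMeasure μ]
    [Fact (1 ≤ p)] (hp : p ≠ ⊤) {A : Lp ℝ p μ →L[ℝ] F} (hA : ∀ f, 0 ≤ f → 0 ≤ A f)
    {h : Lp ℝ p μ} (hker : A h = 0) (h0 : 0 ≤ h) {f : Lp ℝ p μ}
    (hf : ∀ᵐ x ∂μ, x ∉ Function.support (h : α → ℝ) → f x = 0) : A f = 0 := by
  have htrunc : ∀ n : ℕ, A (truncate ((n : ℝ) • h) f) = 0 := fun n =>
    map_eq_zero_of_neg_le_of_le hA (by rw [map_smul, hker, smul_zero]) (neg_le_truncate _ _)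
      (truncate_le (by rw [Nat.cast_smul_eq_nsmul]; exact nsmul_nonneg h0 n) _)
  have hlim := (A.continuous.tendsto f).comp (Lp.tendsto_truncate_natCast_smul hp h0 hf)
  exact tendsto_nhds_unique hlim (tendsto_const_nhds.congr fun n => (htrunc n).symm)

end MeasureTheory

theorem stmt18 {X : Type*} [MeasurableSpace X] (μ : Measure X) [IsFiniteMeasure μ]
    (A : Lp ℝ 2 μ →L[ℝ] Lp ℝ 2 μ)
    (hpos : ∀ f : Lp ℝ 2 μ, 0 ≤ f → 0 ≤ A f)
    (h : Lp ℝ 2 μ) (hker : A h = 0) (h0 : 0 ≤ h) (hne : h ≠ 0) :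
    (∀ f : Lp ℝ 2 μ,
        (∀ᵐ x ∂μ, x ∉ Function.support (h : X → ℝ) → f x = 0) → A f = 0) ∧
    (0 < μ (Function.support (h : X → ℝ))ᶜ →
      ∃ U : Set X, ∃ hU : MeasurableSet U, 0 < μ U ∧ 0 < μ Uᶜ ∧
        (inner ℝ (A (indicatorConstLp 2 hU (measure_ne_top μ U) (1 : ℝ)))
          (indicatorConstLp 2 hU.compl (measure_ne_top μ Uᶜ) (1 : ℝ)) : ℝ) = 0) := by
  have hvanish : ∀ f : Lp ℝ 2 μ,
      (∀ᵐ x ∂μ, x ∉ Function.support (h : X → ℝ) → f x = 0) → A f = 0 := fun _ =>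
    Lp.map_eq_zero_of_ae_eq_zero_off_support ENNReal.ofNat_ne_top hpos hker h0
  refine ⟨hvanish, fun hcompl => ?_⟩
  have hmeas : MeasurableSet (Function.support (h : X → ℝ)) :=
    measurableSet_support (Lp.stronglyMeasurable h).measurable
  have hsupp : 0 < μ (Function.support (h : X → ℝ)) :=
    pos_iff_ne_zero.mpr fun hμ =>
      hne (Lp.eq_zero_iff_ae_eq_zero.mpr (μ.measure_support_eq_zero_iff.mp hμ))
  refine ⟨_, hmeas, hsupp, hcompl, ?_⟩
  rw [hvanish _ ?_, inner_zero_left]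
  filter_upwards [indicatorConstLp_coeFn (p := 2) (hs := hmeas) (hμs := measure_ne_top μ _)
    (c := (1 : ℝ))] with x hx hxU
  rw [hx, Set.indicator_of_notMem hxU]
end
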